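/- arXiv:0911.4802 — 12 statements merged into one kernel-verified Lean document; each statement's English description precedes it below -/
import Mathlib

section
/- Let q₁, q₂ : ℝ² → ℂ be smooth functions of (x,t), and set r₁ = −q₁*, r₂ = −q₂* (star denotes complex conjugation). Then the zero-curvature equation ∂ₜU(ζ) − ∂ₓV(ζ) + U(ζ)V(ζ) − V(ζ)U(ζ) = 0 holds for every ζ ∈ ℂ if and only if q₁ and q₂ satisfy the two-component derivative nonlinear Schrödinger system with ε = −1, namely i∂ₜq_k = −∂ₓₓq_k − (2/3)·i·∂ₓ[(|q₁|² + |q₂|²)q_k] for k = 1, 2. -/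
open Complex Matrix

noncomputable section

/-- Partial derivative in the first (space) variable. -/
def pdx (f : ℝ → ℝ → ℂ) : ℝ → ℝ → ℂ := fun x t => deriv (fun x' => f x' t) x

/-- Partial derivative in the second (time) variable. -/
def pdt (f : ℝ → ℝ → ℂ) : ℝ → ℝ → ℂ := fun x t => deriv (fun t' => f x t') t

/-- Entrywise partial x-derivative of a matrix-valued function. -/
def Mpdx (F : ℝ → ℝ → Matrix (Fin 3) (Fin 3) ℂ) : ℝ → ℝ → Matrix (Fin 3) (Fin 3) ℂ :=
  fun x t => Matrix.of fun i j => deriv (fun x' => F x' t i j) x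

/-- Entrywise partial t-derivative of a matrix-valued function. -/
def Mpdt (F : ℝ → ℝ → Matrix (Fin 3) (Fin 3) ℂ) : ℝ → ℝ → Matrix (Fin 3) (Fin 3) ℂ :=
  fun x t => Matrix.of fun i j => deriv (fun t' => F x t' i j) t

/-- The spatial Lax matrix U(ζ). -/
def Umat (q1 q2 r1 r2 : ℝ → ℝ → ℂ) (ζ : ℂ) (x t : ℝ) : Matrix (Fin 3) (Fin 3) ℂ :=
  ζ ^ 2 • !![-2 * I, 0, 0; 0, I, 0; 0, 0, I] +
    ζ • !![0, q1 x t, q2 x t; r1 x t, 0, 0; r2 x t, 0, 0]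

/-- The temporal Lax matrix V(ζ). -/
def Vmat (q1 q2 r1 r2 : ℝ → ℝ → ℂ) (ζ : ℂ) (x t : ℝ) : Matrix (Fin 3) (Fin 3) ℂ :=
  ζ ^ 4 • !![-9 * I, 0, 0; 0, 0, 0; 0, 0, 0] +
    ζ ^ 3 • !![0, 3 * q1 x t, 3 * q2 x t; 3 * r1 x t, 0, 0; 3 * r2 x t, 0, 0] +
    ζ ^ 2 • !![-I * (r1 x t * q1 x t + r2 x t * q2 x t), 0, 0;
               0, I * (r1 x t * q1 x t), I * (r1 x t * q2 x t);
               0, I * (r2 x t * q1 x t), I * (r2 x t * q2 x t)] +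
    ζ • !![0, I * pdx q1 x t + (2 / 3) * (r1 x t * q1 x t + r2 x t * q2 x t) * q1 x t,
              I * pdx q2 x t + (2 / 3) * (r1 x t * q1 x t + r2 x t * q2 x t) * q2 x t;
           -I * pdx r1 x t + (2 / 3) * (r1 x t * q1 x t + r2 x t * q2 x t) * r1 x t, 0, 0;
           -I * pdx r2 x t + (2 / 3) * (r1 x t * q1 x t + r2 x t * q2 x t) * r2 x t, 0, 0]

/-! ### Auxiliary machinery -/

lemma hasDerivAt_conj {f : ℝ → ℂ} {f' : ℂ} {x : ℝ} (h : HasDerivAt f f' x) :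
    HasDerivAt (fun y => (starRingEnd ℂ) (f y)) ((starRingEnd ℂ) f') x := by
  simpa [Function.comp_def, Complex.conjCAE_apply] using Complex.conjCLE.toContinuousLinearMap.hasFDerivAt.comp_hasDerivAt x h

lemma slice_x {f : ℝ → ℝ → ℂ} (hf : ContDiff ℝ (⊤ : ℕ∞) (fun p : ℝ × ℝ => f p.1 p.2))
    (x t : ℝ) : HasDerivAt (fun x' => f x' t) (pdx f x t) x := by
  have hd : DifferentiableAt ℝ (fun x' => f x' t) x := by
    have h1 : Differentiable ℝ (fun x' : ℝ => (x', t)) :=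
      differentiable_id.prodMk (differentiable_const t)
    exact ((hf.differentiable (by simp)).comp h1).differentiableAt
  exact hd.hasDerivAt

lemma slice_t {f : ℝ → ℝ → ℂ} (hf : ContDiff ℝ (⊤ : ℕ∞) (fun p : ℝ × ℝ => f p.1 p.2))
    (x t : ℝ) : HasDerivAt (fun t' => f x t') (pdt f x t) t := by
  have hd : DifferentiableAt ℝ (fun t' => f x t') t := by
    have h1 : Differentiable ℝ (fun t' : ℝ => (x, t')) :=
      (differentiable_const x).prodMk differentiable_id
    exact ((hf.differentiable (by simp)).comp h1).differentiableAt
  exact hd.hasDerivAt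

lemma pdx_smooth {f : ℝ → ℝ → ℂ} (hf : ContDiff ℝ (⊤ : ℕ∞) (fun p : ℝ × ℝ => f p.1 p.2)) :
    ContDiff ℝ (⊤ : ℕ∞) (fun p : ℝ × ℝ => pdx f p.1 p.2) := by
  have key : ∀ a b : ℝ, pdx f a b
      = fderiv ℝ (fun p : ℝ × ℝ => f p.1 p.2) (a, b) (1, 0) := by
    intro a b
    have hg : HasDerivAt (fun x' : ℝ => ((x' : ℝ), b)) ((1 : ℝ), (0 : ℝ)) a :=
      (hasDerivAt_id a).prodMk (hasDerivAt_const a b)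
    have hF : HasFDerivAt (fun p : ℝ × ℝ => f p.1 p.2)
        (fderiv ℝ (fun p : ℝ × ℝ => f p.1 p.2) (a, b)) (a, b) :=
      ((hf.differentiable (by simp)) (a, b)).hasFDerivAt
    exact (hF.comp_hasDerivAt a hg).deriv
  have h2 : ContDiff ℝ (⊤ : ℕ∞) (fun p : ℝ × ℝ =>
      fderiv ℝ (fun p : ℝ × ℝ => f p.1 p.2) p (1, 0)) :=
    (hf.fderiv_right (by simp)).clm_apply contDiff_const
  have he : (fun p : ℝ × ℝ => pdx f p.1 p.2)
      = fun p : ℝ × ℝ => fderiv ℝ (fun p : ℝ × ℝ => f p.1 p.2) p (1, 0) :=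
    funext fun p => key p.1 p.2
  rw [he]; exact h2

/-- `s = r₁q₁ + r₂q₂` after the reduction. -/
def Sv (q1 q2 : ℝ → ℝ → ℂ) : ℝ → ℝ → ℂ := fun x t =>
  -((starRingEnd ℂ) (q1 x t) * q1 x t) - (starRingEnd ℂ) (q2 x t) * q2 x t

/-- x-derivative of `Sv`. -/
def SX (q1 q2 : ℝ → ℝ → ℂ) : ℝ → ℝ → ℂ := fun x t =>
  -((starRingEnd ℂ) (pdx q1 x t) * q1 x t + (starRingEnd ℂ) (q1 x t) * pdx q1 x t)
    - ((starRingEnd ℂ) (pdx q2 x t) * q2 x t + (starRingEnd ℂ) (q2 x t) * pdx q2 x t)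

def e1f (q1 q2 : ℝ → ℝ → ℂ) : ℝ → ℝ → ℂ := fun x t =>
  pdt q1 x t - I * pdx (pdx q1) x t
    - 2 / 3 * (SX q1 q2 x t * q1 x t + Sv q1 q2 x t * pdx q1 x t)

def e2f (q1 q2 : ℝ → ℝ → ℂ) : ℝ → ℝ → ℂ := fun x t =>
  pdt q2 x t - I * pdx (pdx q2) x t
    - 2 / 3 * (SX q1 q2 x t * q2 x t + Sv q1 q2 x t * pdx q2 x t)

def f1f (q1 q2 : ℝ → ℝ → ℂ) : ℝ → ℝ → ℂ := fun x t =>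
  -(starRingEnd ℂ) (e1f q1 q2 x t)

def f2f (q1 q2 : ℝ → ℝ → ℂ) : ℝ → ℝ → ℂ := fun x t =>
  -(starRingEnd ℂ) (e2f q1 q2 x t)

section main
variable {q1 q2 : ℝ → ℝ → ℂ}
  (hq1 : ContDiff ℝ (⊤ : ℕ∞) (fun p : ℝ × ℝ => q1 p.1 p.2))
  (hq2 : ContDiff ℝ (⊤ : ℕ∞) (fun p : ℝ × ℝ => q2 p.1 p.2))

include hq1 hq2

lemma hpdxr1 : ∀ x t : ℝ, pdx (fun x t => -(starRingEnd ℂ) (q1 x t)) x t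
    = -(starRingEnd ℂ) (pdx q1 x t) := fun x t =>
  ((hasDerivAt_conj (slice_x hq1 x t)).neg).deriv

lemma hpdxr2 : ∀ x t : ℝ, pdx (fun x t => -(starRingEnd ℂ) (q2 x t)) x t
    = -(starRingEnd ℂ) (pdx q2 x t) := fun x t =>
  ((hasDerivAt_conj (slice_x hq2 x t)).neg).deriv

lemma hMU (ζ : ℂ) (x t : ℝ) :
    Mpdt (fun x t => Umat q1 q2 (fun x t => -(starRingEnd ℂ) (q1 x t))
        (fun x t => -(starRingEnd ℂ) (q2 x t)) ζ x t) x t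
      = ζ • !![0, pdt q1 x t, pdt q2 x t;
               -(starRingEnd ℂ) (pdt q1 x t), 0, 0;
               -(starRingEnd ℂ) (pdt q2 x t), 0, 0] := by
  have hc1 : ∀ x t, deriv (fun t' => (starRingEnd ℂ) (q1 x t')) t
      = (starRingEnd ℂ) (pdt q1 x t) := fun x t => (hasDerivAt_conj (slice_t hq1 x t)).deriv
  have hc2 : ∀ x t, deriv (fun t' => (starRingEnd ℂ) (q2 x t')) t
      = (starRingEnd ℂ) (pdt q2 x t) := fun x t => (hasDerivAt_conj (slice_t hq2 x t)).deriv
  ext i j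
  fin_cases i <;> fin_cases j <;>
    simp [Mpdt, Umat, pdt, hc1, hc2, Matrix.vecHead, Matrix.vecTail]

lemma hMV (ζ : ℂ) (x t : ℝ) :
    Mpdx (fun x t => Vmat q1 q2 (fun x t => -(starRingEnd ℂ) (q1 x t))
        (fun x t => -(starRingEnd ℂ) (q2 x t)) ζ x t) x t
      = !![ζ ^ 2 * (-I * SX q1 q2 x t),
           ζ ^ 3 * (3 * pdx q1 x t) + ζ * (I * pdx (pdx q1) x t
             + 2 / 3 * (SX q1 q2 x t * q1 x t + Sv q1 q2 x t * pdx q1 x t)),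
           ζ ^ 3 * (3 * pdx q2 x t) + ζ * (I * pdx (pdx q2) x t
             + 2 / 3 * (SX q1 q2 x t * q2 x t + Sv q1 q2 x t * pdx q2 x t));
           ζ ^ 3 * (3 * -(starRingEnd ℂ) (pdx q1 x t))
             + ζ * (-I * -(starRingEnd ℂ) (pdx (pdx q1) x t)
             + 2 / 3 * (SX q1 q2 x t * -(starRingEnd ℂ) (q1 x t)
                 + Sv q1 q2 x t * -(starRingEnd ℂ) (pdx q1 x t))),
           ζ ^ 2 * (I * (-(starRingEnd ℂ) (pdx q1 x t) * q1 x t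
             + -(starRingEnd ℂ) (q1 x t) * pdx q1 x t)),
           ζ ^ 2 * (I * (-(starRingEnd ℂ) (pdx q1 x t) * q2 x t
             + -(starRingEnd ℂ) (q1 x t) * pdx q2 x t));
           ζ ^ 3 * (3 * -(starRingEnd ℂ) (pdx q2 x t))
             + ζ * (-I * -(starRingEnd ℂ) (pdx (pdx q2) x t)
             + 2 / 3 * (SX q1 q2 x t * -(starRingEnd ℂ) (q2 x t)
                 + Sv q1 q2 x t * -(starRingEnd ℂ) (pdx q2 x t))),
           ζ ^ 2 * (I * (-(starRingEnd ℂ) (pdx q2 x t) * q1 x t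
             + -(starRingEnd ℂ) (q2 x t) * pdx q1 x t)),
           ζ ^ 2 * (I * (-(starRingEnd ℂ) (pdx q2 x t) * q2 x t
             + -(starRingEnd ℂ) (q2 x t) * pdx q2 x t))] := by
  have hr1 := hpdxr1 hq1 hq2
  have hr2 := hpdxr2 hq1 hq2
  have ha1 : HasDerivAt (fun x' => q1 x' t) (pdx q1 x t) x := slice_x hq1 x t
  have ha2 : HasDerivAt (fun x' => q2 x' t) (pdx q2 x t) x := slice_x hq2 x t
  have hb1 : HasDerivAt (fun x' => pdx q1 x' t) (pdx (pdx q1) x t) x :=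
    slice_x (pdx_smooth hq1) x t
  have hb2 : HasDerivAt (fun x' => pdx q2 x' t) (pdx (pdx q2) x t) x :=
    slice_x (pdx_smooth hq2) x t
  have hca1 := hasDerivAt_conj ha1
  have hca2 := hasDerivAt_conj ha2
  have hcb1 := hasDerivAt_conj hb1
  have hcb2 := hasDerivAt_conj hb2
  have hS : HasDerivAt (fun x' => -((starRingEnd ℂ) (q1 x' t) * q1 x' t)
      - (starRingEnd ℂ) (q2 x' t) * q2 x' t) (SX q1 q2 x t) x :=
    ((hca1.mul ha1).neg).sub (hca2.mul ha2)
  ext i j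
  fin_cases i <;> fin_cases j
  · show deriv (fun x' => Vmat q1 q2 (fun x t => -(starRingEnd ℂ) (q1 x t))
        (fun x t => -(starRingEnd ℂ) (q2 x t)) ζ x' t 0 0) x = _
    rw [show (fun x' => Vmat q1 q2 (fun x t => -(starRingEnd ℂ) (q1 x t))
        (fun x t => -(starRingEnd ℂ) (q2 x t)) ζ x' t 0 0)
      = (fun x' => ζ ^ 4 * (-9 * I) + ζ ^ 2 * (-I * (-((starRingEnd ℂ) (q1 x' t) * q1 x' t)
          - (starRingEnd ℂ) (q2 x' t) * q2 x' t))) from funext fun x' => by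
        simp [Vmat, hr1, hr2, Matrix.vecHead, Matrix.vecTail]; try ring; try tauto]
    exact (((hS.const_mul (-I)).const_mul (ζ ^ 2)).const_add (ζ ^ 4 * (-9 * I))).deriv
  · show deriv (fun x' => Vmat q1 q2 (fun x t => -(starRingEnd ℂ) (q1 x t))
        (fun x t => -(starRingEnd ℂ) (q2 x t)) ζ x' t 0 1) x = _
    rw [show (fun x' => Vmat q1 q2 (fun x t => -(starRingEnd ℂ) (q1 x t))
        (fun x t => -(starRingEnd ℂ) (q2 x t)) ζ x' t 0 1)
      = (fun x' => ζ ^ 3 * (3 * q1 x' t) + ζ * (I * pdx q1 x' t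
          + 2 / 3 * ((-((starRingEnd ℂ) (q1 x' t) * q1 x' t)
            - (starRingEnd ℂ) (q2 x' t) * q2 x' t) * q1 x' t))) from funext fun x' => by
        simp [Vmat, hr1, hr2, Matrix.vecHead, Matrix.vecTail]; try ring; try tauto]
    exact (((ha1.const_mul (3:ℂ)).const_mul (ζ ^ 3)).add
      (((hb1.const_mul I).add ((hS.mul ha1).const_mul ((2:ℂ) / 3))).const_mul ζ)).deriv
  · show deriv (fun x' => Vmat q1 q2 (fun x t => -(starRingEnd ℂ) (q1 x t))
        (fun x t => -(starRingEnd ℂ) (q2 x t)) ζ x' t 0 2) x = _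
    rw [show (fun x' => Vmat q1 q2 (fun x t => -(starRingEnd ℂ) (q1 x t))
        (fun x t => -(starRingEnd ℂ) (q2 x t)) ζ x' t 0 2)
      = (fun x' => ζ ^ 3 * (3 * q2 x' t) + ζ * (I * pdx q2 x' t
          + 2 / 3 * ((-((starRingEnd ℂ) (q1 x' t) * q1 x' t)
            - (starRingEnd ℂ) (q2 x' t) * q2 x' t) * q2 x' t))) from funext fun x' => by
        simp [Vmat, hr1, hr2, Matrix.vecHead, Matrix.vecTail]; try ring; try tauto]
    exact (((ha2.const_mul (3:ℂ)).const_mul (ζ ^ 3)).add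
      (((hb2.const_mul I).add ((hS.mul ha2).const_mul ((2:ℂ) / 3))).const_mul ζ)).deriv
  · show deriv (fun x' => Vmat q1 q2 (fun x t => -(starRingEnd ℂ) (q1 x t))
        (fun x t => -(starRingEnd ℂ) (q2 x t)) ζ x' t 1 0) x = _
    rw [show (fun x' => Vmat q1 q2 (fun x t => -(starRingEnd ℂ) (q1 x t))
        (fun x t => -(starRingEnd ℂ) (q2 x t)) ζ x' t 1 0)
      = (fun x' => ζ ^ 3 * (3 * -(starRingEnd ℂ) (q1 x' t))
          + ζ * (-I * -(starRingEnd ℂ) (pdx q1 x' t)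
          + 2 / 3 * ((-((starRingEnd ℂ) (q1 x' t) * q1 x' t)
            - (starRingEnd ℂ) (q2 x' t) * q2 x' t) * -(starRingEnd ℂ) (q1 x' t))))
        from funext fun x' => by
        simp [Vmat, hr1, hr2, Matrix.vecHead, Matrix.vecTail]; try ring; try tauto]
    exact ((((hca1.neg).const_mul (3:ℂ)).const_mul (ζ ^ 3)).add
      ((((hcb1.neg).const_mul (-I)).add
        ((hS.mul (hca1.neg)).const_mul ((2:ℂ) / 3))).const_mul ζ)).deriv
  · show deriv (fun x' => Vmat q1 q2 (fun x t => -(starRingEnd ℂ) (q1 x t))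
        (fun x t => -(starRingEnd ℂ) (q2 x t)) ζ x' t 1 1) x = _
    rw [show (fun x' => Vmat q1 q2 (fun x t => -(starRingEnd ℂ) (q1 x t))
        (fun x t => -(starRingEnd ℂ) (q2 x t)) ζ x' t 1 1)
      = (fun x' => ζ ^ 2 * (I * (-(starRingEnd ℂ) (q1 x' t) * q1 x' t)))
        from funext fun x' => by
        simp [Vmat, hr1, hr2, Matrix.vecHead, Matrix.vecTail]; try ring; try tauto]
    exact ((((hca1.neg).mul ha1).const_mul I).const_mul (ζ ^ 2)).deriv
  · show deriv (fun x' => Vmat q1 q2 (fun x t => -(starRingEnd ℂ) (q1 x t))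
        (fun x t => -(starRingEnd ℂ) (q2 x t)) ζ x' t 1 2) x = _
    rw [show (fun x' => Vmat q1 q2 (fun x t => -(starRingEnd ℂ) (q1 x t))
        (fun x t => -(starRingEnd ℂ) (q2 x t)) ζ x' t 1 2)
      = (fun x' => ζ ^ 2 * (I * (-(starRingEnd ℂ) (q1 x' t) * q2 x' t)))
        from funext fun x' => by
        simp [Vmat, hr1, hr2, Matrix.vecHead, Matrix.vecTail]; try ring; try tauto]
    exact ((((hca1.neg).mul ha2).const_mul I).const_mul (ζ ^ 2)).deriv
  · show deriv (fun x' => Vmat q1 q2 (fun x t => -(starRingEnd ℂ) (q1 x t))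
        (fun x t => -(starRingEnd ℂ) (q2 x t)) ζ x' t 2 0) x = _
    rw [show (fun x' => Vmat q1 q2 (fun x t => -(starRingEnd ℂ) (q1 x t))
        (fun x t => -(starRingEnd ℂ) (q2 x t)) ζ x' t 2 0)
      = (fun x' => ζ ^ 3 * (3 * -(starRingEnd ℂ) (q2 x' t))
          + ζ * (-I * -(starRingEnd ℂ) (pdx q2 x' t)
          + 2 / 3 * ((-((starRingEnd ℂ) (q1 x' t) * q1 x' t)
            - (starRingEnd ℂ) (q2 x' t) * q2 x' t) * -(starRingEnd ℂ) (q2 x' t))))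
        from funext fun x' => by
        simp [Vmat, hr1, hr2, Matrix.vecHead, Matrix.vecTail]; try ring; try tauto]
    exact ((((hca2.neg).const_mul (3:ℂ)).const_mul (ζ ^ 3)).add
      ((((hcb2.neg).const_mul (-I)).add
        ((hS.mul (hca2.neg)).const_mul ((2:ℂ) / 3))).const_mul ζ)).deriv
  · show deriv (fun x' => Vmat q1 q2 (fun x t => -(starRingEnd ℂ) (q1 x t))
        (fun x t => -(starRingEnd ℂ) (q2 x t)) ζ x' t 2 1) x = _
    rw [show (fun x' => Vmat q1 q2 (fun x t => -(starRingEnd ℂ) (q1 x t))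
        (fun x t => -(starRingEnd ℂ) (q2 x t)) ζ x' t 2 1)
      = (fun x' => ζ ^ 2 * (I * (-(starRingEnd ℂ) (q2 x' t) * q1 x' t)))
        from funext fun x' => by
        simp [Vmat, hr1, hr2, Matrix.vecHead, Matrix.vecTail]; try ring; try tauto]
    exact ((((hca2.neg).mul ha1).const_mul I).const_mul (ζ ^ 2)).deriv
  · show deriv (fun x' => Vmat q1 q2 (fun x t => -(starRingEnd ℂ) (q1 x t))
        (fun x t => -(starRingEnd ℂ) (q2 x t)) ζ x' t 2 2) x = _
    rw [show (fun x' => Vmat q1 q2 (fun x t => -(starRingEnd ℂ) (q1 x t))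
        (fun x t => -(starRingEnd ℂ) (q2 x t)) ζ x' t 2 2)
      = (fun x' => ζ ^ 2 * (I * (-(starRingEnd ℂ) (q2 x' t) * q2 x' t)))
        from funext fun x' => by
        simp [Vmat, hr1, hr2, Matrix.vecHead, Matrix.vecTail]; try ring; try tauto]
    exact ((((hca2.neg).mul ha2).const_mul I).const_mul (ζ ^ 2)).deriv


set_option maxHeartbeats 1000000 in
lemma keylem (ζ : ℂ) (x t : ℝ) :
    Mpdt (fun x t => Umat q1 q2 (fun x t => -(starRingEnd ℂ) (q1 x t))
        (fun x t => -(starRingEnd ℂ) (q2 x t)) ζ x t) x t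
      - Mpdx (fun x t => Vmat q1 q2 (fun x t => -(starRingEnd ℂ) (q1 x t))
        (fun x t => -(starRingEnd ℂ) (q2 x t)) ζ x t) x t
      + Umat q1 q2 (fun x t => -(starRingEnd ℂ) (q1 x t))
          (fun x t => -(starRingEnd ℂ) (q2 x t)) ζ x t
        * Vmat q1 q2 (fun x t => -(starRingEnd ℂ) (q1 x t))
          (fun x t => -(starRingEnd ℂ) (q2 x t)) ζ x t
      - Vmat q1 q2 (fun x t => -(starRingEnd ℂ) (q1 x t))
          (fun x t => -(starRingEnd ℂ) (q2 x t)) ζ x t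
        * Umat q1 q2 (fun x t => -(starRingEnd ℂ) (q1 x t))
          (fun x t => -(starRingEnd ℂ) (q2 x t)) ζ x t
      = ζ • !![0, e1f q1 q2 x t, e2f q1 q2 x t;
               f1f q1 q2 x t, 0, 0;
               f2f q1 q2 x t, 0, 0] := by
  have hr1 := hpdxr1 hq1 hq2
  have hr2 := hpdxr2 hq1 hq2
  have hI2 : (I : ℂ) ^ 2 = -1 := Complex.I_sq
  have hI3 : (I : ℂ) ^ 3 = -I := by simp [pow_succ, Complex.I_mul_I]
  have hI4 : (I : ℂ) ^ 4 = 1 := by simp [pow_succ, Complex.I_mul_I]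
  rw [hMU hq1 hq2 ζ x t, hMV hq1 hq2 ζ x t]
  ext i j
  fin_cases i <;> fin_cases j <;>
    · simp [Umat, Vmat, Matrix.mul_apply, Fin.sum_univ_succ, e1f, e2f, f1f, f2f, Sv, SX,
        hr1, hr2, Matrix.vecHead, Matrix.vecTail, map_add, map_sub, _root_.map_mul, map_neg,
        Complex.conj_I, Complex.conj_conj, map_div₀, map_ofNat]
      try ring_nf
      try simp only [hI2, hI3, hI4]
      try ring


lemma hN1 : ∀ x t : ℝ, pdx (fun x t =>
      ((‖q1 x t‖ ^ 2 + ‖q2 x t‖ ^ 2 : ℝ) : ℂ) * q1 x t) x t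
    = ((starRingEnd ℂ) (pdx q1 x t) * q1 x t + (starRingEnd ℂ) (q1 x t) * pdx q1 x t
        + ((starRingEnd ℂ) (pdx q2 x t) * q2 x t + (starRingEnd ℂ) (q2 x t) * pdx q2 x t))
        * q1 x t
      + ((starRingEnd ℂ) (q1 x t) * q1 x t + (starRingEnd ℂ) (q2 x t) * q2 x t)
        * pdx q1 x t := by
  intro x t
  have ha1 : HasDerivAt (fun x' => q1 x' t) (pdx q1 x t) x := slice_x hq1 x t
  have ha2 : HasDerivAt (fun x' => q2 x' t) (pdx q2 x t) x := slice_x hq2 x t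
  have hca1 := hasDerivAt_conj ha1
  have hca2 := hasDerivAt_conj ha2
  show deriv (fun x' =>
      ((‖q1 x' t‖ ^ 2 + ‖q2 x' t‖ ^ 2 : ℝ) : ℂ) * q1 x' t) x = _
  rw [show (fun x' =>
      ((‖q1 x' t‖ ^ 2 + ‖q2 x' t‖ ^ 2 : ℝ) : ℂ) * q1 x' t)
    = (fun x' => ((starRingEnd ℂ) (q1 x' t) * q1 x' t
        + (starRingEnd ℂ) (q2 x' t) * q2 x' t) * q1 x' t) from funext fun x' => by
      rw [Complex.ofReal_add, Complex.sq_norm, Complex.sq_norm,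
        Complex.normSq_eq_conj_mul_self, Complex.normSq_eq_conj_mul_self]]
  exact (((hca1.mul ha1).add (hca2.mul ha2)).mul ha1).deriv

lemma hN2 : ∀ x t : ℝ, pdx (fun x t =>
      ((‖q1 x t‖ ^ 2 + ‖q2 x t‖ ^ 2 : ℝ) : ℂ) * q2 x t) x t
    = ((starRingEnd ℂ) (pdx q1 x t) * q1 x t + (starRingEnd ℂ) (q1 x t) * pdx q1 x t
        + ((starRingEnd ℂ) (pdx q2 x t) * q2 x t + (starRingEnd ℂ) (q2 x t) * pdx q2 x t))
        * q2 x t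
      + ((starRingEnd ℂ) (q1 x t) * q1 x t + (starRingEnd ℂ) (q2 x t) * q2 x t)
        * pdx q2 x t := by
  intro x t
  have ha1 : HasDerivAt (fun x' => q1 x' t) (pdx q1 x t) x := slice_x hq1 x t
  have ha2 : HasDerivAt (fun x' => q2 x' t) (pdx q2 x t) x := slice_x hq2 x t
  have hca1 := hasDerivAt_conj ha1
  have hca2 := hasDerivAt_conj ha2
  show deriv (fun x' =>
      ((‖q1 x' t‖ ^ 2 + ‖q2 x' t‖ ^ 2 : ℝ) : ℂ) * q2 x' t) x = _
  rw [show (fun x' =>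
      ((‖q1 x' t‖ ^ 2 + ‖q2 x' t‖ ^ 2 : ℝ) : ℂ) * q2 x' t)
    = (fun x' => ((starRingEnd ℂ) (q1 x' t) * q1 x' t
        + (starRingEnd ℂ) (q2 x' t) * q2 x' t) * q2 x' t) from funext fun x' => by
      rw [Complex.ofReal_add, Complex.sq_norm, Complex.sq_norm,
        Complex.normSq_eq_conj_mul_self, Complex.normSq_eq_conj_mul_self]]
  exact (((hca1.mul ha1).add (hca2.mul ha2)).mul ha2).deriv
end main

/-- the zero-curvature equation for all ζ is equivalent to the
two-component DNLS system with ε = -1, under the reduction r_k = -q_k^*. -/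
theorem zero_curvature_iff_two_component_DNLS
    (q1 q2 r1 r2 : ℝ → ℝ → ℂ)
    (hq1 : ContDiff ℝ (⊤ : ℕ∞) (fun p : ℝ × ℝ => q1 p.1 p.2))
    (hq2 : ContDiff ℝ (⊤ : ℕ∞) (fun p : ℝ × ℝ => q2 p.1 p.2))
    (hr1 : r1 = fun x t => -starRingEnd ℂ (q1 x t))
    (hr2 : r2 = fun x t => -starRingEnd ℂ (q2 x t)) :
    (∀ ζ : ℂ, ∀ x t : ℝ,
        Mpdt (fun x t => Umat q1 q2 r1 r2 ζ x t) x t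
          - Mpdx (fun x t => Vmat q1 q2 r1 r2 ζ x t) x t
          + Umat q1 q2 r1 r2 ζ x t * Vmat q1 q2 r1 r2 ζ x t
          - Vmat q1 q2 r1 r2 ζ x t * Umat q1 q2 r1 r2 ζ x t = 0)
    ↔ (∀ x t : ℝ,
        I * pdt q1 x t =
          -(pdx (pdx q1) x t) - (2 / 3) * I *
            pdx (fun x t =>
              ((‖q1 x t‖ ^ 2 + ‖q2 x t‖ ^ 2 : ℝ) : ℂ) * q1 x t) x t
        ∧ I * pdt q2 x t =
          -(pdx (pdx q2) x t) - (2 / 3) * I *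
            pdx (fun x t =>
              ((‖q1 x t‖ ^ 2 + ‖q2 x t‖ ^ 2 : ℝ) : ℂ) * q2 x t) x t) := by
  subst hr1; subst hr2
  constructor
  · intro h x t
    have hM : (!![0, e1f q1 q2 x t, e2f q1 q2 x t;
        f1f q1 q2 x t, 0, 0; f2f q1 q2 x t, 0, 0] : Matrix (Fin 3) (Fin 3) ℂ) = 0 := by
      have h0 := ((keylem hq1 hq2 1 x t).symm.trans (h 1 x t))
      rwa [one_smul] at h0
    have he1 : e1f q1 q2 x t = 0 := by simpa using Matrix.ext_iff.2 hM 0 1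
    have he2 : e2f q1 q2 x t = 0 := by simpa using Matrix.ext_iff.2 hM 0 2
    simp only [e1f, e2f, Sv, SX] at he1 he2
    constructor
    · rw [hN1 hq1 hq2 x t]
      linear_combination (norm := ring) I * he1 + pdx (pdx q1) x t * Complex.I_sq
    · rw [hN2 hq1 hq2 x t]
      linear_combination (norm := ring) I * he2 + pdx (pdx q2) x t * Complex.I_sq
  · intro h ζ x t
    obtain ⟨h1, h2⟩ := h x t
    rw [hN1 hq1 hq2 x t] at h1
    rw [hN2 hq1 hq2 x t] at h2
    have he1 : e1f q1 q2 x t = 0 := by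
      simp only [e1f, Sv, SX]
      linear_combination (norm := ring) (-I) * h1
        + (pdt q1 x t - 2/3 * ((-((starRingEnd ℂ) (pdx q1 x t) * q1 x t
            + (starRingEnd ℂ) (q1 x t) * pdx q1 x t)
          - ((starRingEnd ℂ) (pdx q2 x t) * q2 x t
            + (starRingEnd ℂ) (q2 x t) * pdx q2 x t)) * q1 x t
          + (-((starRingEnd ℂ) (q1 x t) * q1 x t)
            - (starRingEnd ℂ) (q2 x t) * q2 x t) * pdx q1 x t)) * Complex.I_sq
    have he2 : e2f q1 q2 x t = 0 := by
      simp only [e2f, Sv, SX]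
      linear_combination (norm := ring) (-I) * h2
        + (pdt q2 x t - 2/3 * ((-((starRingEnd ℂ) (pdx q1 x t) * q1 x t
            + (starRingEnd ℂ) (q1 x t) * pdx q1 x t)
          - ((starRingEnd ℂ) (pdx q2 x t) * q2 x t
            + (starRingEnd ℂ) (q2 x t) * pdx q2 x t)) * q2 x t
          + (-((starRingEnd ℂ) (q1 x t) * q1 x t)
            - (starRingEnd ℂ) (q2 x t) * q2 x t) * pdx q2 x t)) * Complex.I_sq
    have hf1 : f1f q1 q2 x t = 0 := by
      simp only [f1f, he1, map_zero, neg_zero]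
    have hf2 : f2f q1 q2 x t = 0 := by
      simp only [f2f, he2, map_zero, neg_zero]
    rw [keylem hq1 hq2 ζ x t, he1, he2, hf1, hf2]
    have hz : (!![0, 0, 0; 0, 0, 0; 0, 0, 0] : Matrix (Fin 3) (Fin 3) ℂ) = 0 := by
      ext i j; fin_cases i <;> fin_cases j <;> simp [Matrix.vecHead, Matrix.vecTail]
    rw [hz, smul_zero]
end
end

section
/- Let q₁,q₂,r₁,r₂ : ℝ² → ℂ be smooth, fix ζ₁ ∈ ℂ with ζ₁ ≠ 0, and let φ₁,φ₂,φ₃ : ℝ² → ℂ be smooth, with φ₁ and φ₂ nowhere zero, satisfying ∂ₓ(φ₁,φ₂,φ₃)ᵀ = U(ζ₁)(φ₁,φ₂,φ₃)ᵀ. Let Q₂ : ℝ² → ℂ be smooth with ∂ₓQ₂ = q₂. Define the 3×3 matrix T₁(ζ) = [[aζ, 1, 0], [1, bζ, cζ], [0, dζ, ζ]] with a = −φ₂/(ζ₁φ₁), b = (−φ₁ + ζ₁Q₂φ₃)/(ζ₁φ₂), c = −Q₂, d = −φ₃/φ₂, and define the transformed potentials q̂₁ = (q₁φ₂ + q₂φ₃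 − 3iζ₁φ₁)φ₂/φ₁², r̂₁ = [(r₁φ₁ + 3iζ₁φ₂)φ₁ + (r₂φ₂ − r₁φ₃)ζ₁Q₂φ₁]/φ₂², r̂₂ = (r₁φ₃ − r₂φ₂)ζ₁φ₁/φ₂², q̂₂ = [(φ₂q₁ + φ₃q₂ − 3iζ₁φ₁)ζ₁Q₂φ₂ − q₂φ₁φ₂]/(ζ₁φ₁²). Then for every ζ ∈ ℂ, ∂ₓT₁(ζ) + T₁(ζ)U(ζ) = Û(ζ)T₁(ζ), where Û is the matrix U with q₁,q₂,r₁,r₂ replaced by q̂₁,q̂₂,r̂₁,r̂₂. -/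
set_option maxHeartbeats 2000000


open Complex Matrix

noncomputable section

/-- the elementary Darboux matrix T₁ intertwines the spatial Lax
matrices U and Û: ∂ₓT₁ + T₁U = ÛT₁. -/
theorem elementary_darboux_x_equation
    (q1 q2 r1 r2 : ℝ → ℝ → ℂ)
    (hq1 : ContDiff ℝ (⊤ : ℕ∞) (fun p : ℝ × ℝ => q1 p.1 p.2))
    (hq2 : ContDiff ℝ (⊤ : ℕ∞) (fun p : ℝ × ℝ => q2 p.1 p.2))
    (hr1 : ContDiff ℝ (⊤ : ℕ∞) (fun p : ℝ × ℝ => r1 p.1 p.2))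
    (hr2 : ContDiff ℝ (⊤ : ℕ∞) (fun p : ℝ × ℝ => r2 p.1 p.2))
    (ζ₁ : ℂ) (hζ₁ : ζ₁ ≠ 0)
    (φ1 φ2 φ3 : ℝ → ℝ → ℂ)
    (hφ1 : ContDiff ℝ (⊤ : ℕ∞) (fun p : ℝ × ℝ => φ1 p.1 p.2))
    (hφ2 : ContDiff ℝ (⊤ : ℕ∞) (fun p : ℝ × ℝ => φ2 p.1 p.2))
    (hφ3 : ContDiff ℝ (⊤ : ℕ∞) (fun p : ℝ × ℝ => φ3 p.1 p.2))
    (hφ1ne : ∀ x t : ℝ, φ1 x t ≠ 0)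
    (hφ2ne : ∀ x t : ℝ, φ2 x t ≠ 0)
    (hode : ∀ x t : ℝ,
      ![pdx φ1 x t, pdx φ2 x t, pdx φ3 x t] =
        (Umat q1 q2 r1 r2 ζ₁ x t).mulVec ![φ1 x t, φ2 x t, φ3 x t])
    (Q2 : ℝ → ℝ → ℂ)
    (hQ2smooth : ContDiff ℝ (⊤ : ℕ∞) (fun p : ℝ × ℝ => Q2 p.1 p.2))
    (hQ2 : ∀ x t : ℝ, pdx Q2 x t = q2 x t)
    -- entries of the Darboux matrix
    (a b c d : ℝ → ℝ → ℂ)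
    (ha : a = fun x t => -(φ2 x t) / (ζ₁ * φ1 x t))
    (hb : b = fun x t => (-(φ1 x t) + ζ₁ * Q2 x t * φ3 x t) / (ζ₁ * φ2 x t))
    (hc : c = fun x t => -(Q2 x t))
    (hd : d = fun x t => -(φ3 x t) / φ2 x t)
    (T1 : ℂ → ℝ → ℝ → Matrix (Fin 3) (Fin 3) ℂ)
    (hT1 : T1 = fun ζ x t =>
      !![a x t * ζ, 1, 0;
         1, b x t * ζ, c x t * ζ;
         0, d x t * ζ, ζ])
    -- transformed potentials
    (q1h q2h r1h r2h : ℝ → ℝ → ℂ)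
    (hq1h : q1h = fun x t =>
      (q1 x t * φ2 x t + q2 x t * φ3 x t - 3 * I * ζ₁ * φ1 x t) * φ2 x t / (φ1 x t) ^ 2)
    (hr1h : r1h = fun x t =>
      ((r1 x t * φ1 x t + 3 * I * ζ₁ * φ2 x t) * φ1 x t
        + (r2 x t * φ2 x t - r1 x t * φ3 x t) * ζ₁ * Q2 x t * φ1 x t) / (φ2 x t) ^ 2)
    (hr2h : r2h = fun x t =>
      (r1 x t * φ3 x t - r2 x t * φ2 x t) * ζ₁ * φ1 x t / (φ2 x t) ^ 2)
    (hq2h : q2h = fun x t =>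
      ((φ2 x t * q1 x t + φ3 x t * q2 x t - 3 * I * ζ₁ * φ1 x t) * ζ₁ * Q2 x t * φ2 x t
        - q2 x t * φ1 x t * φ2 x t) / (ζ₁ * (φ1 x t) ^ 2)) :
    ∀ ζ : ℂ, ∀ x t : ℝ,
      Mpdx (fun x t => T1 ζ x t) x t + T1 ζ x t * Umat q1 q2 r1 r2 ζ x t
        = Umat q1h q2h r1h r2h ζ x t * T1 ζ x t := by
  intro ζ x t
  have key : ∀ (f : ℝ → ℝ → ℂ), ContDiff ℝ (⊤ : ℕ∞) (fun p : ℝ × ℝ => f p.1 p.2) →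
      DifferentiableAt ℝ (fun x' => f x' t) x := by
    intro f hf
    have h : (fun x' => f x' t) = (fun p : ℝ × ℝ => f p.1 p.2) ∘ (fun x' => (x', t)) := rfl
    rw [h]
    exact ((hf.differentiable (by simp)) (x, t)).comp x (differentiableAt_id.prodMk (differentiableAt_const t))
  have hP1 := hφ1ne x t
  have hP2 := hφ2ne x t
  have h0 := congrFun (hode x t) 0
  have h1 := congrFun (hode x t) 1
  have h2 := congrFun (hode x t) 2
  simp [Umat, pdx, Matrix.mulVec, dotProduct, Fin.sum_univ_three] at h0 h1 h2
  have e1 := (key φ1 hφ1).hasDerivAt; rw [h0] at e1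
  have e2 := (key φ2 hφ2).hasDerivAt; rw [h1] at e2
  have e3 := (key φ3 hφ3).hasDerivAt; rw [h2] at e3
  have eQ := (key Q2 hQ2smooth).hasDerivAt
  rw [show deriv (fun x' => Q2 x' t) x = q2 x t from hQ2 x t] at eQ
  have da : deriv (fun x' => a x' t) x =
      (-(ζ₁ * r1 x t * φ1 x t + ζ₁ ^ 2 * I * φ2 x t) * (ζ₁ * φ1 x t) -
        -φ2 x t * (ζ₁ * (-(ζ₁ ^ 2 * (2 * I) * φ1 x t) + ζ₁ * q1 x t * φ2 x t
          + ζ₁ * q2 x t * φ3 x t))) / (ζ₁ * φ1 x t) ^ 2 := by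
    simp only [ha]
    exact ((e2.neg.div (e1.const_mul ζ₁) (mul_ne_zero hζ₁ hP1))).deriv
  have db : deriv (fun x' => b x' t) x =
      ((-(-(ζ₁ ^ 2 * (2 * I) * φ1 x t) + ζ₁ * q1 x t * φ2 x t + ζ₁ * q2 x t * φ3 x t)
          + (ζ₁ * q2 x t * φ3 x t + ζ₁ * Q2 x t * (ζ₁ * r2 x t * φ1 x t + ζ₁ ^ 2 * I * φ3 x t)))
          * (ζ₁ * φ2 x t)
        - (-φ1 x t + ζ₁ * Q2 x t * φ3 x t)
          * (ζ₁ * (ζ₁ * r1 x t * φ1 x t + ζ₁ ^ 2 * I * φ2 x t))) / (ζ₁ * φ2 x t) ^ 2 := by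
    simp only [hb]
    exact (((e1.neg.add ((eQ.const_mul ζ₁).mul e3)).div (e2.const_mul ζ₁)
      (mul_ne_zero hζ₁ hP2))).deriv
  have dc : deriv (fun x' => c x' t) x = -(q2 x t) := by
    simp only [hc]
    exact (eQ.neg).deriv
  have dd : deriv (fun x' => d x' t) x =
      (-(ζ₁ * r2 x t * φ1 x t + ζ₁ ^ 2 * I * φ3 x t) * φ2 x t
        - -φ3 x t * (ζ₁ * r1 x t * φ1 x t + ζ₁ ^ 2 * I * φ2 x t)) / (φ2 x t) ^ 2 := by
    simp only [hd]
    exact ((e3.neg).div e2 hP2).deriv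
  ext i j
  fin_cases i <;> fin_cases j
  · -- entry (0,0)
    simp [hT1, Mpdx, Umat, Matrix.mul_apply, Fin.sum_univ_three]
    try rw [da]
    try simp only [ha, hb, hc, hd, hq1h, hq2h, hr1h, hr2h]
    try field_simp [ha, hb, hc, hd, hq1h, hq2h, hr1h, hr2h, hP1, hP2, hζ₁]
    try ring
  · -- entry (0,1)
    simp [hT1, Mpdx, Umat, Matrix.mul_apply, Fin.sum_univ_three]
    try simp only [ha, hb, hc, hd, hq1h, hq2h, hr1h, hr2h]
    try field_simp [ha, hb, hc, hd, hq1h, hq2h, hr1h, hr2h, hP1, hP2, hζ₁]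
    try ring
  · -- entry (0,2)
    simp [hT1, Mpdx, Umat, Matrix.mul_apply, Fin.sum_univ_three]
    try simp only [ha, hb, hc, hd, hq1h, hq2h, hr1h, hr2h]
    try field_simp [ha, hb, hc, hd, hq1h, hq2h, hr1h, hr2h, hP1, hP2, hζ₁]
    try ring
  · -- entry (1,0)
    simp [hT1, Mpdx, Umat, Matrix.mul_apply, Fin.sum_univ_three]
    try simp only [ha, hb, hc, hd, hq1h, hq2h, hr1h, hr2h]
    try field_simp [ha, hb, hc, hd, hq1h, hq2h, hr1h, hr2h, hP1, hP2, hζ₁]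
    try ring
  · -- entry (1,1)
    simp [hT1, Mpdx, Umat, Matrix.mul_apply, Fin.sum_univ_three]
    try rw [db]
    try simp only [ha, hb, hc, hd, hq1h, hq2h, hr1h, hr2h]
    try field_simp [ha, hb, hc, hd, hq1h, hq2h, hr1h, hr2h, hP1, hP2, hζ₁]
    try ring
  · -- entry (1,2)
    simp [hT1, Mpdx, Umat, Matrix.mul_apply, Fin.sum_univ_three]
    try rw [dc]
    try simp only [ha, hb, hc, hd, hq1h, hq2h, hr1h, hr2h]
    try field_simp [ha, hb, hc, hd, hq1h, hq2h, hr1h, hr2h, hP1, hP2, hζ₁]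
    try ring
  · -- entry (2,0)
    simp [hT1, Mpdx, Umat, Matrix.mul_apply, Fin.sum_univ_three]
    try simp only [ha, hb, hc, hd, hq1h, hq2h, hr1h, hr2h]
    try field_simp [ha, hb, hc, hd, hq1h, hq2h, hr1h, hr2h, hP1, hP2, hζ₁]
    try ring
  · -- entry (2,1)
    simp [hT1, Mpdx, Umat, Matrix.mul_apply, Fin.sum_univ_three]
    try rw [dd]
    try simp only [ha, hb, hc, hd, hq1h, hq2h, hr1h, hr2h]
    try field_simp [ha, hb, hc, hd, hq1h, hq2h, hr1h, hr2h, hP1, hP2, hζ₁]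
    try ring
  · -- entry (2,2)
    simp [hT1, Mpdx, Umat, Matrix.mul_apply, Fin.sum_univ_three]
    try simp only [ha, hb, hc, hd, hq1h, hq2h, hr1h, hr2h]
    try field_simp [ha, hb, hc, hd, hq1h, hq2h, hr1h, hr2h, hP1, hP2, hζ₁]
    try ring
end
end

section
/- Let q₁,q₂,r₁,r₂ : ℝ² → ℂ be smooth, fix ζ₁ ∈ ℂ, and let φ₁,φ₂,φ₃ : ℝ² → ℂ be smooth with φ₂ nowhere zero and satisfying ∂ₓ(φ₁,φ₂,φ₃)ᵀ = U(ζ₁)(φ₁,φ₂,φ₃)ᵀ. Then ∂ₓ(−φ₃/φ₂) = (r₁φ₃ − r₂φ₂)ζ₁φ₁/φ₂²; that is, the entry d = −φ₃/φ₂ of the elementary Darboux matrix satisfies ∂ₓd = r̂₂, the transformed potential. -/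
open Complex Matrix

noncomputable section

/-- the entry d = -φ₃/φ₂ of the elementary Darboux matrix
satisfies ∂ₓd = r̂₂, the transformed potential. -/
theorem darboux_entry_d_x_derivative
    (q1 q2 r1 r2 : ℝ → ℝ → ℂ)
    (hq1 : ContDiff ℝ (⊤ : ℕ∞) (fun p : ℝ × ℝ => q1 p.1 p.2))
    (hq2 : ContDiff ℝ (⊤ : ℕ∞) (fun p : ℝ × ℝ => q2 p.1 p.2))
    (hr1 : ContDiff ℝ (⊤ : ℕ∞) (fun p : ℝ × ℝ => r1 p.1 p.2))
    (hr2 : ContDiff ℝ (⊤ : ℕ∞) (fun p : ℝ × ℝ => r2 p.1 p.2))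
    (ζ₁ : ℂ)
    (φ1 φ2 φ3 : ℝ → ℝ → ℂ)
    (hφ1 : ContDiff ℝ (⊤ : ℕ∞) (fun p : ℝ × ℝ => φ1 p.1 p.2))
    (hφ2 : ContDiff ℝ (⊤ : ℕ∞) (fun p : ℝ × ℝ => φ2 p.1 p.2))
    (hφ3 : ContDiff ℝ (⊤ : ℕ∞) (fun p : ℝ × ℝ => φ3 p.1 p.2))
    (hφ2ne : ∀ x t : ℝ, φ2 x t ≠ 0)
    (hode : ∀ x t : ℝ,
      ![pdx φ1 x t, pdx φ2 x t, pdx φ3 x t] =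
        (Umat q1 q2 r1 r2 ζ₁ x t).mulVec ![φ1 x t, φ2 x t, φ3 x t]) :
    ∀ x t : ℝ,
      pdx (fun x t => -(φ3 x t) / φ2 x t) x t =
        (r1 x t * φ3 x t - r2 x t * φ2 x t) * ζ₁ * φ1 x t / (φ2 x t) ^ 2 := by
  intro x t
  have hd2 : DifferentiableAt ℝ (fun x' => φ2 x' t) x := by
    exact ((hφ2.differentiable (by simp)).comp
      ((differentiable_id (𝕜 := ℝ)).prodMk (differentiable_const t))).differentiableAt
  have hd3 : DifferentiableAt ℝ (fun x' => φ3 x' t) x := by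
    exact ((hφ3.differentiable (by simp)).comp
      ((differentiable_id (𝕜 := ℝ)).prodMk (differentiable_const t))).differentiableAt
  have h2 : pdx φ2 x t = ζ₁ * (r1 x t * φ1 x t) + I * (φ2 x t * ζ₁ ^ 2) := by
    have := congrFun (hode x t) 1
    simpa [Umat, Matrix.mulVec, dotProduct, Fin.sum_univ_three, mul_comm,
      mul_assoc, mul_left_comm] using this
  have h3 : pdx φ3 x t = ζ₁ * (r2 x t * φ1 x t) + I * (φ3 x t * ζ₁ ^ 2) := by
    have := congrFun (hode x t) 2
    simpa [Umat, Matrix.mulVec, dotProduct, Fin.sum_univ_three, mul_comm,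
      mul_assoc, mul_left_comm] using this
  have hder : pdx (fun x t => -(φ3 x t) / φ2 x t) x t =
      (-(pdx φ3 x t) * φ2 x t - (-(φ3 x t)) * pdx φ2 x t) / (φ2 x t) ^ 2 := by
    have h := (hd3.hasDerivAt.neg.div hd2.hasDerivAt (hφ2ne x t)).deriv
    simp only [pdx, Pi.neg_apply] at h ⊢
    exact h
  rw [hder, h2, h3]
  field_simp [hφ2ne x t]
  ring
end
end

section
/- Let ζ₁ ∈ ℂ with ζ₁ ≠ 0, and let φ₁, φ₂, φ₃, Q₂ ∈ ℂ with φ₁ ≠ 0 and φ₂ ≠ 0. Define the 3×3 matrix T₁(ζ) = [[aζ, 1, 0], [1, bζ, cζ], [0, dζ, ζ]] with a = −φ₂/(ζ₁φ₁), b = (−φ₁ + ζ₁Q₂φ₃)/(ζ₁φ₂), c = −Q₂, d = −φ₃/φ₂. Then for every ζ ∈ ℂ, det T₁(ζ) = ζ(ζ²/ζ₁² − 1). -/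
open Complex Matrix

noncomputable section

/-- the determinant of the elementary Darboux matrix T₁ equals
ζ(ζ²/ζ₁² − 1). -/
theorem det_elementary_darboux_matrix
    (ζ₁ : ℂ) (hζ₁ : ζ₁ ≠ 0)
    (φ1 φ2 φ3 Q2 : ℂ) (hφ1 : φ1 ≠ 0) (hφ2 : φ2 ≠ 0)
    (a b c d : ℂ)
    (ha : a = -φ2 / (ζ₁ * φ1))
    (hb : b = (-φ1 + ζ₁ * Q2 * φ3) / (ζ₁ * φ2))
    (hc : c = -Q2)
    (hd : d = -φ3 / φ2) :
    ∀ ζ : ℂ,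
      Matrix.det !![a * ζ, 1, 0; 1, b * ζ, c * ζ; 0, d * ζ, ζ] =
        ζ * (ζ ^ 2 / ζ₁ ^ 2 - 1) := by
  intro ζ
  subst ha hb hc hd
  rw [Matrix.det_fin_three]
  simp [Matrix.cons_val_zero, Matrix.cons_val_one]
  field_simp
  ring
end
end

section
/- Let U, Û, V, V̂ : ℝ² → M₃(ℂ) be continuous matrix-valued functions of (x,t), and let T : ℝ² → M₃(ℂ) be differentiable with T(x,t) invertible for all (x,t), satisfying ∂ₓT + TU = ÛT and ∂ₜT + TV = V̂T. If a differentiable row-vector function Ψ : ℝ² → ℂ³ satisfies the conjugate linear system −∂ₓΨ = ΨU and −∂ₜΨ = ΨV, then Ψ̂ := ΨT⁻¹ satisfies −∂ₓΨ̂ = Ψ̂Û and −∂ₜΨ̂ = Ψ̂V̂. In other words, if T is a Darboux matrix of the original linear system, then T⁻¹ is a Darboux matrix of the conjugate linear system. -/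
open Complex Matrix

noncomputable section

/-- x-derivative of a row-vector-valued function, componentwise. -/
def vpdx (f : ℝ → ℝ → Fin 3 → ℂ) : ℝ → ℝ → Fin 3 → ℂ :=
  fun x t i => deriv (fun x' => f x' t i) x

/-- t-derivative of a row-vector-valued function, componentwise. -/
def vpdt (f : ℝ → ℝ → Fin 3 → ℂ) : ℝ → ℝ → Fin 3 → ℂ :=
  fun x t i => deriv (fun t' => f x t' i) t

lemma det_diffAt {B : ℝ → Matrix (Fin 3) (Fin 3) ℂ} {x : ℝ}
    (h : ∀ i j, DifferentiableAt ℝ (fun s => B s i j) x) :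
    DifferentiableAt ℝ (fun s => (B s).det) x := by
  simp only [Matrix.det_apply']
  exact DifferentiableAt.fun_sum fun σ _ =>
    (DifferentiableAt.fun_finsetProd fun i _ => h (σ i) i).const_mul _

lemma inv_entry_diffAt {B : ℝ → Matrix (Fin 3) (Fin 3) ℂ} {x : ℝ}
    (h : ∀ i j, DifferentiableAt ℝ (fun s => B s i j) x) (hu : IsUnit (B x)) (i j : Fin 3) :
    DifferentiableAt ℝ (fun s => (B s)⁻¹ i j) x := by
  have hadj : DifferentiableAt ℝ (fun s => (B s).adjugate i j) x := by
    simp only [Matrix.adjugate_apply]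
    apply det_diffAt
    intro k l
    by_cases hk : k = j
    · simp only [Matrix.updateRow_apply, hk, if_pos rfl]
      exact differentiableAt_const _
    · simp only [Matrix.updateRow_apply, hk, if_false]
      exact h k l
  have hdet := det_diffAt h
  have hne : (B x).det ≠ 0 := ((Matrix.isUnit_iff_isUnit_det _).mp hu).ne_zero
  have heq : (fun s => (B s)⁻¹ i j) = fun s => ((B s).det)⁻¹ * (B s).adjugate i j := by
    funext s
    rw [Matrix.inv_def]
    simp [Ring.inverse_eq_inv']
  rw [heq]
  exact (hdet.inv hne).mul hadj

lemma deriv_inv_mat {B : ℝ → Matrix (Fin 3) (Fin 3) ℂ} {x : ℝ}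
    (h : ∀ s i j, DifferentiableAt ℝ (fun s' => B s' i j) s)
    (hu : ∀ s, IsUnit (B s)) :
    (Matrix.of fun i j => deriv (fun s => (B s)⁻¹ i j) x) =
      -((B x)⁻¹ * (Matrix.of fun i j => deriv (fun s => B s i j) x) * (B x)⁻¹) := by
  set D : Matrix (Fin 3) (Fin 3) ℂ := Matrix.of fun i j => deriv (fun s => (B s)⁻¹ i j) x with hD
  set B' : Matrix (Fin 3) (Fin 3) ℂ := Matrix.of fun i j => deriv (fun s => B s i j) x with hB'
  have hinvd : ∀ s i j, DifferentiableAt ℝ (fun s' => (B s')⁻¹ i j) s := fun s i j =>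
    inv_entry_diffAt (h s) (hu s) i j
  have key : D * B x + (B x)⁻¹ * B' = 0 := by
    ext i j
    have hconst : (fun s => ∑ k, (B s)⁻¹ i k * B s k j) = fun _ => (1 : Matrix (Fin 3) (Fin 3) ℂ) i j := by
      funext s
      rw [← Matrix.mul_apply, Matrix.nonsing_inv_mul _ ((Matrix.isUnit_iff_isUnit_det _).mp (hu s))]
    have h1 : deriv (fun s => ∑ k, (B s)⁻¹ i k * B s k j) x = 0 := by
      rw [hconst]; exact deriv_const _ _
    rw [deriv_fun_sum (fun k _ => ((hinvd x i k).fun_mul (h x k j)))] at h1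
    have h2 : ∀ k : Fin 3, deriv (fun s => (B s)⁻¹ i k * B s k j) x
        = D i k * B x k j + (B x)⁻¹ i k * B' k j := fun k =>
      deriv_mul (hinvd x i k) (h x k j)
    simp only [h2] at h1
    simpa [Matrix.add_apply, Matrix.mul_apply, Finset.sum_add_distrib] using h1
  have hBB : B x * (B x)⁻¹ = 1 := Matrix.mul_nonsing_inv _ ((Matrix.isUnit_iff_isUnit_det _).mp (hu x))
  have : D * B x = -((B x)⁻¹ * B') := by
    exact eq_neg_of_add_eq_zero_left key
  calc D = D * (B x * (B x)⁻¹) := by rw [hBB, mul_one]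
    _ = (D * B x) * (B x)⁻¹ := by rw [mul_assoc]
    _ = -((B x)⁻¹ * B' * (B x)⁻¹) := by rw [this]; noncomm_ring

lemma one_var (B : ℝ → Matrix (Fin 3) (Fin 3) ℂ) (ψ : ℝ → Fin 3 → ℂ)
    (Uc Uhc : Matrix (Fin 3) (Fin 3) ℂ) (x : ℝ)
    (hB : ∀ s i j, DifferentiableAt ℝ (fun s' => B s' i j) s)
    (hu : ∀ s, IsUnit (B s))
    (hψ : ∀ i, DifferentiableAt ℝ (fun s => ψ s i) x)
    (hBx : (Matrix.of fun i j => deriv (fun s => B s i j) x) + B x * Uc = Uhc * B x)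
    (hψx : -(fun i => deriv (fun s => ψ s i) x) = Matrix.vecMul (ψ x) Uc) :
    -(fun i => deriv (fun s => Matrix.vecMul (ψ s) (B s)⁻¹ i) x) =
      Matrix.vecMul (Matrix.vecMul (ψ x) (B x)⁻¹) Uhc := by
  set Bi := (B x)⁻¹ with hBi
  set B' : Matrix (Fin 3) (Fin 3) ℂ := Matrix.of fun i j => deriv (fun s => B s i j) x with hB'
  set D : Matrix (Fin 3) (Fin 3) ℂ := Matrix.of fun i j => deriv (fun s => (B s)⁻¹ i j) x with hDdef
  have hinvd : ∀ i j, DifferentiableAt ℝ (fun s' => (B s')⁻¹ i j) x := fun i j =>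
    inv_entry_diffAt (hB x) (hu x) i j
  have hD : D = -(Bi * B' * Bi) := deriv_inv_mat hB hu
  have hudet := (Matrix.isUnit_iff_isUnit_det _).mp (hu x)
  have hBB : B x * Bi = 1 := Matrix.mul_nonsing_inv _ hudet
  have hBB' : Bi * B x = 1 := Matrix.nonsing_inv_mul _ hudet
  -- compute the derivative of the product
  have hvec : (fun i => deriv (fun s => Matrix.vecMul (ψ s) (B s)⁻¹ i) x)
      = Matrix.vecMul (fun k => deriv (fun s => ψ s k) x) Bi + Matrix.vecMul (ψ x) D := by
    funext i
    have heq : (fun s => Matrix.vecMul (ψ s) (B s)⁻¹ i) = fun s => ∑ k, ψ s k * (B s)⁻¹ k i := by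
      funext s; simp [Matrix.vecMul, dotProduct]
    rw [heq, deriv_fun_sum (fun k _ => (hψ k).fun_mul (hinvd k i))]
    have h2 : ∀ k : Fin 3, deriv (fun s => ψ s k * (B s)⁻¹ k i) x
        = deriv (fun s => ψ s k) x * Bi k i + ψ x k * D k i := fun k =>
      deriv_mul (hψ k) (hinvd k i)
    simp only [h2]
    simp [Matrix.vecMul, dotProduct, Finset.sum_add_distrib]
  have hψ' : (fun k => deriv (fun s => ψ s k) x) = -(Matrix.vecMul (ψ x) Uc) := by
    rw [← hψx]; funext k; simp
  have hB'eq : B' = Uhc * B x - B x * Uc := eq_sub_of_add_eq hBx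
  have expand : Bi * (Uhc * B x - B x * Uc) * Bi = Bi * Uhc - Uc * Bi := by
    rw [mul_sub, sub_mul, ← mul_assoc Bi Uhc, mul_assoc (Bi * Uhc), hBB, mul_one,
      ← mul_assoc Bi (B x), hBB', one_mul]
  rw [hvec, hψ', hD, hB'eq, expand]
  simp only [Matrix.vecMul_neg, Matrix.neg_vecMul, Matrix.vecMul_sub, Matrix.vecMul_vecMul]
  abel

/-- if T is a Darboux matrix of the original linear system, then
T⁻¹ is a Darboux matrix of the conjugate linear system. -/
theorem darboux_matrix_inverse_for_conjugate_system
    (U Uh V Vh : ℝ → ℝ → Matrix (Fin 3) (Fin 3) ℂ)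
    (hUc : Continuous (fun p : ℝ × ℝ => U p.1 p.2))
    (hUhc : Continuous (fun p : ℝ × ℝ => Uh p.1 p.2))
    (hVc : Continuous (fun p : ℝ × ℝ => V p.1 p.2))
    (hVhc : Continuous (fun p : ℝ × ℝ => Vh p.1 p.2))
    (T : ℝ → ℝ → Matrix (Fin 3) (Fin 3) ℂ)
    (hTdiff : ∀ i j : Fin 3, Differentiable ℝ (fun p : ℝ × ℝ => T p.1 p.2 i j))
    (hTinv : ∀ x t : ℝ, IsUnit (T x t))
    (hTx : ∀ x t : ℝ, Mpdx T x t + T x t * U x t = Uh x t * T x t)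
    (hTt : ∀ x t : ℝ, Mpdt T x t + T x t * V x t = Vh x t * T x t)
    (Ψ : ℝ → ℝ → Fin 3 → ℂ)
    (hΨdiff : ∀ i : Fin 3, Differentiable ℝ (fun p : ℝ × ℝ => Ψ p.1 p.2 i))
    (hΨx : ∀ x t : ℝ, -(vpdx Ψ x t) = Matrix.vecMul (Ψ x t) (U x t))
    (hΨt : ∀ x t : ℝ, -(vpdt Ψ x t) = Matrix.vecMul (Ψ x t) (V x t)) :
    (∀ x t : ℝ,
      -(vpdx (fun x t => Matrix.vecMul (Ψ x t) (T x t)⁻¹) x t) =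
        Matrix.vecMul (Matrix.vecMul (Ψ x t) (T x t)⁻¹) (Uh x t)) ∧
    (∀ x t : ℝ,
      -(vpdt (fun x t => Matrix.vecMul (Ψ x t) (T x t)⁻¹) x t) =
        Matrix.vecMul (Matrix.vecMul (Ψ x t) (T x t)⁻¹) (Vh x t)) := by
  constructor
  · intro x t
    exact one_var (fun s => T s t) (fun s => Ψ s t) (U x t) (Uh x t) x
      (fun s i j => by have := ((hTdiff i j) (s, t)).comp s
                         ((differentiableAt_fun_id (𝕜 := ℝ) (x := s)).prodMk (differentiableAt_const t)); exact this)
      (fun s => hTinv s t)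
      (fun i => by have := ((hΨdiff i) (x, t)).comp x
                     ((differentiableAt_fun_id (𝕜 := ℝ) (x := x)).prodMk (differentiableAt_const t)); exact this)
      (hTx x t) (hΨx x t)
  · intro x t
    exact one_var (fun s => T x s) (fun s => Ψ x s) (V x t) (Vh x t) t
      (fun s i j => ((hTdiff i j) (x, s)).comp s
        ((differentiableAt_const x).prodMk differentiableAt_fun_id))
      (fun s => hTinv x s)
      (fun i => ((hΨdiff i) (x, t)).comp t
        ((differentiableAt_const x).prodMk differentiableAt_fun_id))
      (hTt x t) (hΨt x t)
end
end

section
/- Let q₁,q₂,r₁,r₂ : ℝ² → ℂ be smooth, fix ζ₂ ∈ ℂ with ζ₂ ≠ 0, and let the row vector (χ₁,χ₂,χ₃) be smooth with χ₁,χ₂ nowhere zero and satisfying −∂ₓ(χ₁,χ₂,χ₃) = (χ₁,χ₂,χ₃)U(ζ₂). Let R₂ be smooth with ∂ₓR₂ = r₂. Define T₂(ζ) = [[âζ, 1, 0], [1, b̂ζ, ĉζ], [0, d̂ζ, ζ]] with â = −χ₂/(ζ₂χ₁), b̂ = −(χ₁ + ζ₂R₂χ₃)/(ζ₂χ₂),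 ĉ = −χ₃/χ₂, d̂ = R₂, and the transformed potentials q̂₁ = [q₁χ₁² + 3iζ₂χ₁χ₂ + ζ₂χ₁R₂(q₁χ₃ − χ₂q₂)]/χ₂², r̂₁ = [(r₁χ₂ + r₂χ₃)χ₂ − 3iζ₂χ₁χ₂]/χ₁², r̂₂ = [(3iR₂ζ₂² − r₂)χ₁χ₂ − ζ₂χ₂R₂(r₁χ₂ + r₂χ₃)]/(ζ₂χ₁²), q̂₂ = (q₁χ₃ − q₂χ₂)ζ₂χ₁/χ₂². Then for every ζ ∈ ℂ, ∂ₓT₂(ζ) = U(ζ)T₂(ζ) − T₂(ζ)Û(ζ), where Û is the matrix U with q₁,q₂,r₁,r₂ replaced by q̂₁,q̂₂,r̂₁,r̂₂; equivalently, for any row-vector solution Ψ of −∂ₓΨ = ΨÛ, the row vector ΨT₂... (i.e., T₂ is a Darboux matrix for the conjugate linear system in the x-variable). -/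
open Complex Matrix

noncomputable section

set_option maxHeartbeats 4000000 in
/-- the elementary Darboux matrix T₂ for the conjugate system
satisfies ∂ₓT₂ = UT₂ − T₂Û. -/
theorem conjugate_darboux_x_equation
    (q1 q2 r1 r2 : ℝ → ℝ → ℂ)
    (hq1 : ContDiff ℝ (⊤ : ℕ∞) (fun p : ℝ × ℝ => q1 p.1 p.2))
    (hq2 : ContDiff ℝ (⊤ : ℕ∞) (fun p : ℝ × ℝ => q2 p.1 p.2))
    (hr1 : ContDiff ℝ (⊤ : ℕ∞) (fun p : ℝ × ℝ => r1 p.1 p.2))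
    (hr2 : ContDiff ℝ (⊤ : ℕ∞) (fun p : ℝ × ℝ => r2 p.1 p.2))
    (ζ₂ : ℂ) (hζ₂ : ζ₂ ≠ 0)
    (χ1 χ2 χ3 : ℝ → ℝ → ℂ)
    (hχ1 : ContDiff ℝ (⊤ : ℕ∞) (fun p : ℝ × ℝ => χ1 p.1 p.2))
    (hχ2 : ContDiff ℝ (⊤ : ℕ∞) (fun p : ℝ × ℝ => χ2 p.1 p.2))
    (hχ3 : ContDiff ℝ (⊤ : ℕ∞) (fun p : ℝ × ℝ => χ3 p.1 p.2))
    (hχ1ne : ∀ x t : ℝ, χ1 x t ≠ 0)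
    (hχ2ne : ∀ x t : ℝ, χ2 x t ≠ 0)
    (hode : ∀ x t : ℝ,
      -(vpdx (fun x t => ![χ1 x t, χ2 x t, χ3 x t]) x t) =
        Matrix.vecMul ![χ1 x t, χ2 x t, χ3 x t] (Umat q1 q2 r1 r2 ζ₂ x t))
    (R2 : ℝ → ℝ → ℂ)
    (hR2smooth : ContDiff ℝ (⊤ : ℕ∞) (fun p : ℝ × ℝ => R2 p.1 p.2))
    (hR2 : ∀ x t : ℝ, pdx R2 x t = r2 x t)
    -- entries of the Darboux matrix
    (ah bh ch dh : ℝ → ℝ → ℂ)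
    (hah : ah = fun x t => -(χ2 x t) / (ζ₂ * χ1 x t))
    (hbh : bh = fun x t => -(χ1 x t + ζ₂ * R2 x t * χ3 x t) / (ζ₂ * χ2 x t))
    (hch : ch = fun x t => -(χ3 x t) / χ2 x t)
    (hdh : dh = fun x t => R2 x t)
    (T2 : ℂ → ℝ → ℝ → Matrix (Fin 3) (Fin 3) ℂ)
    (hT2 : T2 = fun ζ x t =>
      !![ah x t * ζ, 1, 0;
         1, bh x t * ζ, ch x t * ζ;
         0, dh x t * ζ, ζ])
    -- transformed potentials
    (q1h q2h r1h r2h : ℝ → ℝ → ℂ)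
    (hq1h : q1h = fun x t =>
      (q1 x t * (χ1 x t) ^ 2 + 3 * I * ζ₂ * χ1 x t * χ2 x t
        + ζ₂ * χ1 x t * R2 x t * (q1 x t * χ3 x t - χ2 x t * q2 x t)) / (χ2 x t) ^ 2)
    (hr1h : r1h = fun x t =>
      ((r1 x t * χ2 x t + r2 x t * χ3 x t) * χ2 x t - 3 * I * ζ₂ * χ1 x t * χ2 x t)
        / (χ1 x t) ^ 2)
    (hr2h : r2h = fun x t =>
      ((3 * I * R2 x t * ζ₂ ^ 2 - r2 x t) * χ1 x t * χ2 x t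
        - ζ₂ * χ2 x t * R2 x t * (r1 x t * χ2 x t + r2 x t * χ3 x t))
        / (ζ₂ * (χ1 x t) ^ 2))
    (hq2h : q2h = fun x t =>
      (q1 x t * χ3 x t - q2 x t * χ2 x t) * ζ₂ * χ1 x t / (χ2 x t) ^ 2) :
    ∀ ζ : ℂ, ∀ x t : ℝ,
      Mpdx (fun x t => T2 ζ x t) x t =
        Umat q1 q2 r1 r2 ζ x t * T2 ζ x t - T2 ζ x t * Umat q1h q2h r1h r2h ζ x t := by
  intro ζ x t
  subst hah hbh hch hdh hT2 hq1h hq2h hr1h hr2h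
  -- differentiability in x
  have h1d : DifferentiableAt ℝ (fun x' => χ1 x' t) x := by
    have := hχ1.differentiable (by simp); fun_prop
  have h2d : DifferentiableAt ℝ (fun x' => χ2 x' t) x := by
    have := hχ2.differentiable (by simp); fun_prop
  have h3d : DifferentiableAt ℝ (fun x' => χ3 x' t) x := by
    have := hχ3.differentiable (by simp); fun_prop
  have hRdiff : DifferentiableAt ℝ (fun x' => R2 x' t) x := by
    have := hR2smooth.differentiable (by simp); fun_prop
  -- extract the ODE componentwise
  have h0 := congrFun (hode x t) 0
  have h1 := congrFun (hode x t) 1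
  have h2 := congrFun (hode x t) 2
  simp only [vpdx, Umat, Pi.neg_apply, Matrix.cons_val_zero, Matrix.vecMul, dotProduct,
    Fin.sum_univ_three, Matrix.add_apply, Matrix.smul_apply, smul_eq_mul, Matrix.cons_val',
    Matrix.cons_val_one, Matrix.head_cons, Matrix.empty_val', Matrix.cons_val_fin_one,
    Matrix.head_fin_const, Matrix.of_apply, Matrix.cons_val_two, Matrix.tail_cons] at h0 h1 h2
  have e1 : deriv (fun x' => χ1 x' t) x
      = 2*I*ζ₂^2*χ1 x t - ζ₂*r1 x t*χ2 x t - ζ₂*r2 x t*χ3 x t := by linear_combination -h0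
  have e2 : deriv (fun x' => χ2 x' t) x
      = -(ζ₂*q1 x t*χ1 x t) - I*ζ₂^2*χ2 x t := by linear_combination -h1
  have e3 : deriv (fun x' => χ3 x' t) x
      = -(ζ₂*q2 x t*χ1 x t) - I*ζ₂^2*χ3 x t := by linear_combination -h2
  have eR : deriv (fun x' => R2 x' t) x = r2 x t := hR2 x t
  have hc1 : HasDerivAt (fun x' => χ1 x' t)
      (2*I*ζ₂^2*χ1 x t - ζ₂*r1 x t*χ2 x t - ζ₂*r2 x t*χ3 x t) x := by
    rw [← e1]; exact h1d.hasDerivAt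
  have hc2 : HasDerivAt (fun x' => χ2 x' t)
      (-(ζ₂*q1 x t*χ1 x t) - I*ζ₂^2*χ2 x t) x := by
    rw [← e2]; exact h2d.hasDerivAt
  have hc3 : HasDerivAt (fun x' => χ3 x' t)
      (-(ζ₂*q2 x t*χ1 x t) - I*ζ₂^2*χ3 x t) x := by
    rw [← e3]; exact h3d.hasDerivAt
  have hcR : HasDerivAt (fun x' => R2 x' t) (r2 x t) x := by
    rw [← eR]; exact hRdiff.hasDerivAt
  have hn1 : ζ₂ * χ1 x t ≠ 0 := mul_ne_zero hζ₂ (hχ1ne x t)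
  have hn2 : ζ₂ * χ2 x t ≠ 0 := mul_ne_zero hζ₂ (hχ2ne x t)
  -- derivatives of the entries
  have hA : HasDerivAt (fun x' => -χ2 x' t / (ζ₂ * χ1 x' t) * ζ)
      (((-(-(ζ₂*q1 x t*χ1 x t) - I*ζ₂^2*χ2 x t)) * (ζ₂ * χ1 x t)
        - (-χ2 x t) * (ζ₂ * (2*I*ζ₂^2*χ1 x t - ζ₂*r1 x t*χ2 x t - ζ₂*r2 x t*χ3 x t)))
        / (ζ₂ * χ1 x t) ^ 2 * ζ) x :=
    HasDerivAt.mul_const (HasDerivAt.div hc2.neg (hc1.const_mul ζ₂) hn1) ζ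
  have hB : HasDerivAt (fun x' => -(χ1 x' t + ζ₂ * R2 x' t * χ3 x' t) / (ζ₂ * χ2 x' t) * ζ)
      (((-((2*I*ζ₂^2*χ1 x t - ζ₂*r1 x t*χ2 x t - ζ₂*r2 x t*χ3 x t)
            + (ζ₂ * r2 x t * χ3 x t + ζ₂ * R2 x t * (-(ζ₂*q2 x t*χ1 x t) - I*ζ₂^2*χ3 x t))))
          * (ζ₂ * χ2 x t)
        - (-(χ1 x t + ζ₂ * R2 x t * χ3 x t)) * (ζ₂ * (-(ζ₂*q1 x t*χ1 x t) - I*ζ₂^2*χ2 x t)))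
        / (ζ₂ * χ2 x t) ^ 2 * ζ) x := by
    refine HasDerivAt.mul_const (HasDerivAt.div ?_ (hc2.const_mul ζ₂) hn2) ζ
    exact (hc1.add (((hcR.const_mul ζ₂).mul hc3))).neg
  have hC : HasDerivAt (fun x' => -χ3 x' t / χ2 x' t * ζ)
      (((-(-(ζ₂*q2 x t*χ1 x t) - I*ζ₂^2*χ3 x t)) * χ2 x t
        - (-χ3 x t) * (-(ζ₂*q1 x t*χ1 x t) - I*ζ₂^2*χ2 x t)) / (χ2 x t) ^ 2 * ζ) x :=
    HasDerivAt.mul_const (HasDerivAt.div hc3.neg hc2 (hχ2ne x t)) ζ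
  have hD : HasDerivAt (fun x' => R2 x' t * ζ) (r2 x t * ζ) x :=
    HasDerivAt.mul_const hcR ζ
  have hz1 := hζ₂
  have hx1 := hχ1ne x t
  have hx2 := hχ2ne x t
  ext i j
  fin_cases i <;> fin_cases j <;>
    simp only [Fin.zero_eta, Fin.mk_one, Fin.reduceFinMk, Mpdx, Umat, Matrix.of_apply, Matrix.cons_val', Matrix.cons_val_zero,
      Matrix.cons_val_one, Matrix.head_cons, Matrix.cons_val_two, Matrix.tail_cons,
      Matrix.head_fin_const, Matrix.empty_val', Matrix.cons_val_fin_one, Matrix.sub_apply,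
      Matrix.mul_apply, Fin.sum_univ_three, Matrix.add_apply, Matrix.smul_apply, smul_eq_mul,
      deriv_const']
  · rw [hA.deriv]; field_simp; ring
  · field_simp; ring
  · field_simp; ring
  · rw [eq_comm, sub_eq_zero]; field_simp; ring
  · rw [hB.deriv]; field_simp; ring
  · rw [hC.deriv]; field_simp; ring
  · field_simp; ring
  · rw [hD.deriv]; field_simp; ring
  · field_simp; ring
end
end

section
/- Let ζ₁, ζ₂ ∈ ℂ with ζ₁ ≠ 0, ζ₂ ≠ 0 and ζ₁² ≠ ζ₂², let φ₁, φ₂, φ₃, Q₂, χ₁, χ₂, χ₃ ∈ ℂ with φ₁ ≠ 0 and φ₂ ≠ 0, and let T₁(ζ) = [[aζ, 1, 0], [1, bζ, cζ], [0, dζ, ζ]] with a = −φ₂/(ζ₁φ₁), b = (−φ₁ + ζ₁Q₂φ₃)/(ζ₁φ₂), c = −Q₂, d = −φ₃/φ₂. Define χ̂₁ = (ζ₁ζ₂χ₁φ₁ + ζ₁²χ₂φ₂ + ζ₁²χ₃φ₃)/((ζ₁² − ζ₂²)φ₂), χ̂₂ = (ζ₁²χ₁φ₁ + ζ₁ζ₂χ₂φ₂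 + ζ₁ζ₂χ₃φ₃)/((ζ₁² − ζ₂²)φ₁), χ̂₃ = ζ₁(ζ₁χ₁φ₁ + ζ₂χ₂φ₂ + ζ₂χ₃φ₃)Q₂/((ζ₁² − ζ₂²)φ₁) + χ₃/ζ₂. Then the row vector identity (χ̂₁, χ̂₂, χ̂₃)·T₁(ζ₂) = (χ₁, χ₂, χ₃) holds; that is, (χ̂₁,χ̂₂,χ̂₃) = (χ₁,χ₂,χ₃)·T₁(ζ₂)⁻¹. -/
open Complex Matrix

noncomputable section

/-- the row vector (χ̂₁, χ̂₂, χ̂₃) satisfies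
(χ̂₁, χ̂₂, χ̂₃)·T₁(ζ₂) = (χ₁, χ₂, χ₃), i.e. (χ̂₁,χ̂₂,χ̂₃) = (χ₁,χ₂,χ₃)·T₁(ζ₂)⁻¹. -/
theorem transformed_conjugate_seed
    (ζ₁ ζ₂ : ℂ) (hζ₁ : ζ₁ ≠ 0) (hζ₂ : ζ₂ ≠ 0) (hζ : ζ₁ ^ 2 ≠ ζ₂ ^ 2)
    (φ1 φ2 φ3 Q2 χ1 χ2 χ3 : ℂ) (hφ1 : φ1 ≠ 0) (hφ2 : φ2 ≠ 0)
    (a b c d : ℂ)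
    (ha : a = -φ2 / (ζ₁ * φ1))
    (hb : b = (-φ1 + ζ₁ * Q2 * φ3) / (ζ₁ * φ2))
    (hc : c = -Q2)
    (hd : d = -φ3 / φ2)
    (T1 : ℂ → Matrix (Fin 3) (Fin 3) ℂ)
    (hT1 : T1 = fun ζ => !![a * ζ, 1, 0; 1, b * ζ, c * ζ; 0, d * ζ, ζ])
    (χh1 χh2 χh3 : ℂ)
    (hχh1 : χh1 =
      (ζ₁ * ζ₂ * χ1 * φ1 + ζ₁ ^ 2 * χ2 * φ2 + ζ₁ ^ 2 * χ3 * φ3) / ((ζ₁ ^ 2 - ζ₂ ^ 2) * φ2))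
    (hχh2 : χh2 =
      (ζ₁ ^ 2 * χ1 * φ1 + ζ₁ * ζ₂ * χ2 * φ2 + ζ₁ * ζ₂ * χ3 * φ3) / ((ζ₁ ^ 2 - ζ₂ ^ 2) * φ1))
    (hχh3 : χh3 =
      ζ₁ * (ζ₁ * χ1 * φ1 + ζ₂ * χ2 * φ2 + ζ₂ * χ3 * φ3) * Q2 / ((ζ₁ ^ 2 - ζ₂ ^ 2) * φ1)
        + χ3 / ζ₂) :
    Matrix.vecMul ![χh1, χh2, χh3] (T1 ζ₂) = ![χ1, χ2, χ3] := by
  have hsub : ζ₁ ^ 2 - ζ₂ ^ 2 ≠ 0 := sub_ne_zero.mpr hζ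
  obtain ⟨D, hD⟩ : ∃ D, D = ζ₁ ^ 2 - ζ₂ ^ 2 := ⟨_, rfl⟩
  rw [← hD] at hsub hχh1 hχh2 hχh3
  subst hT1 ha hb hc hd hχh1 hχh2 hχh3
  funext i
  fin_cases i
  · simp [Matrix.vecMul, dotProduct, Fin.sum_univ_succ]
    field_simp [hsub, hζ₁, hζ₂, hφ1, hφ2]
    subst hD
    ring
  · simp [Matrix.vecMul, dotProduct, Fin.sum_univ_succ]
    field_simp [hsub, hζ₁, hζ₂, hφ1, hφ2]
    subst hD
    ring
  · simp [Matrix.vecMul, dotProduct, Fin.sum_univ_succ]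
    field_simp [hsub, hζ₁, hζ₂, hφ1, hφ2]
    subst hD
    ring
end
end

section
/- Let q₁, q₂ : ℝ² → ℂ be smooth and set r₁ = −q₁*, r₂ = −q₂* (star denotes complex conjugation). Fix ζ₁ ∈ ℂ. If the column vector Φ = (φ₁,φ₂,φ₃)ᵀ satisfies ∂ₓΦ = U(ζ₁)Φ and ∂ₜΦ = V(ζ₁)Φ, then the row vector Ψ = (φ₁*, φ₂*, φ₃*) satisfies the conjugate linear system at the conjugate spectral parameter: −∂ₓΨ = ΨU(ζ₁*) and −∂ₜΨ = ΨV(ζ₁*). -/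
open Complex Matrix

noncomputable section

lemma deriv_conj' (f : ℝ → ℂ) (x : ℝ) :
    deriv (fun y => starRingEnd ℂ (f y)) x = starRingEnd ℂ (deriv f x) := by
  have h : (fun y => starRingEnd ℂ (f y)) = Complex.conjCLE ∘ f := rfl
  rw [h, ← fderiv_apply_one_eq_deriv, ← fderiv_apply_one_eq_deriv, Complex.conjCLE.comp_fderiv]
  rfl

set_option maxHeartbeats 2000000 in
/-- under the reduction r_k = -q_k^*, the componentwise conjugate
of a solution of the Lax pair at ζ₁ solves the conjugate system at ζ₁^*. -/
theorem conjugate_of_solution_solves_conjugate_system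
    (q1 q2 r1 r2 : ℝ → ℝ → ℂ)
    (hq1 : ContDiff ℝ (⊤ : ℕ∞) (fun p : ℝ × ℝ => q1 p.1 p.2))
    (hq2 : ContDiff ℝ (⊤ : ℕ∞) (fun p : ℝ × ℝ => q2 p.1 p.2))
    (hr1 : r1 = fun x t => -starRingEnd ℂ (q1 x t))
    (hr2 : r2 = fun x t => -starRingEnd ℂ (q2 x t))
    (ζ₁ : ℂ)
    (φ1 φ2 φ3 : ℝ → ℝ → ℂ)
    (hφ1 : ContDiff ℝ (⊤ : ℕ∞) (fun p : ℝ × ℝ => φ1 p.1 p.2))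
    (hφ2 : ContDiff ℝ (⊤ : ℕ∞) (fun p : ℝ × ℝ => φ2 p.1 p.2))
    (hφ3 : ContDiff ℝ (⊤ : ℕ∞) (fun p : ℝ × ℝ => φ3 p.1 p.2))
    (hodex : ∀ x t : ℝ,
      ![pdx φ1 x t, pdx φ2 x t, pdx φ3 x t] =
        (Umat q1 q2 r1 r2 ζ₁ x t).mulVec ![φ1 x t, φ2 x t, φ3 x t])
    (hodet : ∀ x t : ℝ,
      ![pdt φ1 x t, pdt φ2 x t, pdt φ3 x t] =
        (Vmat q1 q2 r1 r2 ζ₁ x t).mulVec ![φ1 x t, φ2 x t, φ3 x t])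
    (Ψ : ℝ → ℝ → Fin 3 → ℂ)
    (hΨ : Ψ = fun x t =>
      ![starRingEnd ℂ (φ1 x t), starRingEnd ℂ (φ2 x t), starRingEnd ℂ (φ3 x t)]) :
    (∀ x t : ℝ,
      -(vpdx Ψ x t) = Matrix.vecMul (Ψ x t) (Umat q1 q2 r1 r2 (starRingEnd ℂ ζ₁) x t)) ∧
    (∀ x t : ℝ,
      -(vpdt Ψ x t) = Matrix.vecMul (Ψ x t) (Vmat q1 q2 r1 r2 (starRingEnd ℂ ζ₁) x t)) := by
  
  subst hr1 hr2 hΨ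
  refine ⟨fun x t => ?_, fun x t => ?_⟩
  · have h1 := congrArg (starRingEnd ℂ) (congrFun (hodex x t) 0)
    have h2 := congrArg (starRingEnd ℂ) (congrFun (hodex x t) 1)
    have h3 := congrArg (starRingEnd ℂ) (congrFun (hodex x t) 2)
    simp [Umat, pdx, Matrix.mulVec, dotProduct, Fin.sum_univ_three,
      Complex.conj_I, deriv.neg, deriv_conj', Matrix.vecHead, Matrix.vecTail, map_ofNat, mul_comm] at h1 h2 h3
    funext j
    fin_cases j <;>
      simp [vpdx, Umat, Matrix.vecMul, dotProduct, Fin.sum_univ_three,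
        Complex.conj_I, deriv.neg, deriv_conj', Matrix.vecHead, Matrix.vecTail, map_ofNat] <;>
      first
        | (rw [h1]; ring)
        | (rw [h2]; ring)
        | (rw [h3]; ring)
  · have h1 := congrArg (starRingEnd ℂ) (congrFun (hodet x t) 0)
    have h2 := congrArg (starRingEnd ℂ) (congrFun (hodet x t) 1)
    have h3 := congrArg (starRingEnd ℂ) (congrFun (hodet x t) 2)
    simp [Vmat, pdx, pdt, Matrix.mulVec, dotProduct, Fin.sum_univ_three,
      Complex.conj_I, deriv.neg, deriv_conj', Matrix.vecHead, Matrix.vecTail, map_ofNat] at h1 h2 h3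
    funext j
    fin_cases j <;>
      simp [vpdt, Vmat, pdx, Matrix.vecMul, dotProduct, Fin.sum_univ_three,
        Complex.conj_I, deriv.neg, deriv_conj', Matrix.vecHead, Matrix.vecTail, map_ofNat] <;>
      first
        | (rw [h1]; ring)
        | (rw [h2]; ring)
        | (rw [h3]; ring)
end
end

section
/- Let q₁, q₂ : ℝ² → ℂ be smooth and set r₁ = −q₁*, r₂ = −q₂*. Fix ζ₁ ∈ ℂ with ζ₁ ≠ 0 and ζ₁² ≠ (ζ₁*)², and let φ₁, φ₂, φ₃ : ℝ² → ℂ be smooth with D := ζ₁|φ₁|² + ζ₁*(|φ₂|² + |φ₃|²) nowhere zero. Define c₁ = ((ζ₁*)² − ζ₁²)φ₂*φ₁/(|ζ₁|²D), c₂ = ((ζ₁*)² − ζ₁²)φ₃*φ₁/(|ζ₁|²D), c₃ = ((ζ₁*)² − ζ₁²)φ₁*φ₂/(|ζ₁|²D*), c₄ = ((ζ₁*)² − ζ₁²)φ₁*φ₃/(|ζ₁|²D*), and the transformed fields q₁[1] = q₁ − ∂ₓc₁, q₂[1] = q₂ − ∂ₓc₂, r₁[1] = r₁ − ∂ₓc₃,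 r₂[1] = r₂ − ∂ₓc₄. Then the reduction is preserved: r₁[1] = −q₁[1]* and r₂[1] = −q₂[1]*. -/
open Complex

noncomputable section

/-- the two-fold Darboux transformation preserves the reduction
r₁ = -q₁^*, r₂ = -q₂^*. -/
theorem reduction_preserved_by_darboux
    (q1 q2 r1 r2 : ℝ → ℝ → ℂ)
    (hq1 : ContDiff ℝ (⊤ : ℕ∞) (fun p : ℝ × ℝ => q1 p.1 p.2))
    (hq2 : ContDiff ℝ (⊤ : ℕ∞) (fun p : ℝ × ℝ => q2 p.1 p.2))
    (hr1 : r1 = fun x t => -starRingEnd ℂ (q1 x t))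
    (hr2 : r2 = fun x t => -starRingEnd ℂ (q2 x t))
    (ζ₁ : ℂ) (hζ₁ : ζ₁ ≠ 0) (hζ : ζ₁ ^ 2 ≠ (starRingEnd ℂ ζ₁) ^ 2)
    (φ1 φ2 φ3 : ℝ → ℝ → ℂ)
    (hφ1 : ContDiff ℝ (⊤ : ℕ∞) (fun p : ℝ × ℝ => φ1 p.1 p.2))
    (hφ2 : ContDiff ℝ (⊤ : ℕ∞) (fun p : ℝ × ℝ => φ2 p.1 p.2))
    (hφ3 : ContDiff ℝ (⊤ : ℕ∞) (fun p : ℝ × ℝ => φ3 p.1 p.2))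
    (D : ℝ → ℝ → ℂ)
    (hD : D = fun x t => ζ₁ * ((‖φ1 x t‖ ^ 2 : ℝ) : ℂ)
      + starRingEnd ℂ ζ₁ *
        (((‖φ2 x t‖ ^ 2 : ℝ) : ℂ) + ((‖φ3 x t‖ ^ 2 : ℝ) : ℂ)))
    (hDne : ∀ x t : ℝ, D x t ≠ 0)
    (c1 c2 c3 c4 : ℝ → ℝ → ℂ)
    (hc1 : c1 = fun x t => ((starRingEnd ℂ ζ₁) ^ 2 - ζ₁ ^ 2) * starRingEnd ℂ (φ2 x t) * φ1 x t
      / (((‖ζ₁‖ ^ 2 : ℝ) : ℂ) * D x t))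
    (hc2 : c2 = fun x t => ((starRingEnd ℂ ζ₁) ^ 2 - ζ₁ ^ 2) * starRingEnd ℂ (φ3 x t) * φ1 x t
      / (((‖ζ₁‖ ^ 2 : ℝ) : ℂ) * D x t))
    (hc3 : c3 = fun x t => ((starRingEnd ℂ ζ₁) ^ 2 - ζ₁ ^ 2) * starRingEnd ℂ (φ1 x t) * φ2 x t
      / (((‖ζ₁‖ ^ 2 : ℝ) : ℂ) * starRingEnd ℂ (D x t)))
    (hc4 : c4 = fun x t => ((starRingEnd ℂ ζ₁) ^ 2 - ζ₁ ^ 2) * starRingEnd ℂ (φ1 x t) * φ3 x t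
      / (((‖ζ₁‖ ^ 2 : ℝ) : ℂ) * starRingEnd ℂ (D x t)))
    (q1n q2n r1n r2n : ℝ → ℝ → ℂ)
    (hq1n : q1n = fun x t => q1 x t - pdx c1 x t)
    (hq2n : q2n = fun x t => q2 x t - pdx c2 x t)
    (hr1n : r1n = fun x t => r1 x t - pdx c3 x t)
    (hr2n : r2n = fun x t => r2 x t - pdx c4 x t) :
    (∀ x t : ℝ, r1n x t = -starRingEnd ℂ (q1n x t)) ∧
    (∀ x t : ℝ, r2n x t = -starRingEnd ℂ (q2n x t)) := by
  have hc3' : ∀ x t, c3 x t = -starRingEnd ℂ (c1 x t) := by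
    intro x t
    simp only [hc1, hc3, map_div₀, map_mul, map_sub, map_pow, Complex.conj_conj,
      Complex.conj_ofReal]
    ring
  have hc4' : ∀ x t, c4 x t = -starRingEnd ℂ (c2 x t) := by
    intro x t
    simp only [hc2, hc4, map_div₀, map_mul, map_sub, map_pow, Complex.conj_conj,
      Complex.conj_ofReal]
    ring
  have key : ∀ (c cc : ℝ → ℝ → ℂ), (∀ x t, cc x t = -starRingEnd ℂ (c x t)) →
      ∀ x t, pdx cc x t = -starRingEnd ℂ (pdx c x t) := by
    intro c cc h x t
    have : (fun x' => cc x' t) = fun x' => -star ((fun x' => c x' t) x') := by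
      funext x'; exact h x' t
    simp only [pdx, this, deriv.neg', deriv.star]
    rw [show (fun x' => -star (c x' t)) = -(fun x' => star (c x' t)) from rfl, deriv.neg,
      deriv.star]
    rfl
  constructor
  · intro x t
    simp only [hr1n, hq1n, hr1, map_sub, key c1 c3 hc3' x t]
    ring
  · intro x t
    simp only [hr2n, hq2n, hr2, map_sub, key c2 c4 hc4' x t]
    ring
end
end

section
/- With T(ζ) as defined from ζ₁ and φ = (φ₁,φ₂,φ₃), the kernel condition T(ζ₁)·φ = 0 holds, where φ is regarded as a column vector in ℂ³. -/
open Complex Matrix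

noncomputable section

def Dval (ζ₁ : ℂ) (φ : Fin 3 → ℂ) : ℂ :=
  ζ₁ * ((‖φ 0‖ ^ 2 : ℝ) : ℂ)
    + starRingEnd ℂ ζ₁ * (((‖φ 1‖ ^ 2 : ℝ) : ℂ) + ((‖φ 2‖ ^ 2 : ℝ) : ℂ))

def Nmat (ζ₁ : ℂ) (φ : Fin 3 → ℂ) (ζ : ℂ) : Matrix (Fin 3) (Fin 3) ℂ :=
  Matrix.diagonal ![ζ * φ 0 / (ζ₁ * Dval ζ₁ φ),
    ζ * φ 1 / (ζ₁ * starRingEnd ℂ (Dval ζ₁ φ)),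
    ζ * φ 2 / (ζ₁ * starRingEnd ℂ (Dval ζ₁ φ))]

def Mmat (ζ₁ : ℂ) (φ : Fin 3 → ℂ) (ζ : ℂ) : Matrix (Fin 3) (Fin 3) ℂ :=
  !![ζ * starRingEnd ℂ (φ 0), starRingEnd ℂ ζ₁ * starRingEnd ℂ (φ 1),
       starRingEnd ℂ ζ₁ * starRingEnd ℂ (φ 2);
     starRingEnd ℂ ζ₁ * starRingEnd ℂ (φ 0), ζ * starRingEnd ℂ (φ 1), ζ * starRingEnd ℂ (φ 2);
     starRingEnd ℂ ζ₁ * starRingEnd ℂ (φ 0), ζ * starRingEnd ℂ (φ 1), ζ * starRingEnd ℂ (φ 2)]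

def Tmat (ζ₁ : ℂ) (φ : Fin 3 → ℂ) (ζ : ℂ) : Matrix (Fin 3) (Fin 3) ℂ :=
  ((ζ ^ 2 - (starRingEnd ℂ ζ₁) ^ 2) / (starRingEnd ℂ ζ₁) ^ 2) • (1 : Matrix (Fin 3) (Fin 3) ℂ)
    + (((starRingEnd ℂ ζ₁) ^ 2 - ζ₁ ^ 2) / (starRingEnd ℂ ζ₁) ^ 2) •
        (Nmat ζ₁ φ ζ * Mmat ζ₁ φ ζ)

/-- the Darboux matrix annihilates its seed vector at ζ = ζ₁. -/
theorem darboux_matrix_annihilates_seed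
    (ζ₁ : ℂ) (hζ₁ : ζ₁ ≠ 0)
    (φ : Fin 3 → ℂ) (hD : Dval ζ₁ φ ≠ 0) :
    (Tmat ζ₁ φ ζ₁).mulVec φ = 0 := by
  have hζ₁' : starRingEnd ℂ ζ₁ ≠ 0 := by simpa using hζ₁
  have hD' : starRingEnd ℂ (Dval ζ₁ φ) ≠ 0 := by simpa using hD
  have habs : ∀ z : ℂ, ((‖z‖ ^ 2 : ℝ) : ℂ) = starRingEnd ℂ z * z := by
    intro z
    rw [Complex.sq_norm, Complex.normSq_eq_conj_mul_self]
  have hDexp : Dval ζ₁ φ = ζ₁ * (starRingEnd ℂ (φ 0) * φ 0)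
      + starRingEnd ℂ ζ₁ * (starRingEnd ℂ (φ 1) * φ 1 + starRingEnd ℂ (φ 2) * φ 2) := by
    simp [Dval, habs]
  have hDconj : starRingEnd ℂ (Dval ζ₁ φ) = starRingEnd ℂ ζ₁ * (starRingEnd ℂ (φ 0) * φ 0)
      + ζ₁ * (starRingEnd ℂ (φ 1) * φ 1 + starRingEnd ℂ (φ 2) * φ 2) := by
    rw [hDexp]; simp [mul_comm]
  have hM : (Mmat ζ₁ φ ζ₁).mulVec φ
      = ![Dval ζ₁ φ, starRingEnd ℂ (Dval ζ₁ φ), starRingEnd ℂ (Dval ζ₁ φ)] := by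
    have hφ : φ = ![φ 0, φ 1, φ 2] := by
      funext i; fin_cases i <;> rfl
    rw [Mmat]
    rw (occs := .pos [1]) [hφ]
    simp [Matrix.cons_mulVec, Matrix.cons_dotProduct, hDexp, hDconj]
    and_intros <;> · simp [Matrix.vecHead, Matrix.vecTail]; ring
  have hNM : (Nmat ζ₁ φ ζ₁ * Mmat ζ₁ φ ζ₁).mulVec φ = φ := by
    rw [← Matrix.mulVec_mulVec, hM]
    funext i
    fin_cases i <;>
      · simp [Nmat, Matrix.mulVec, dotProduct, Fin.sum_univ_three, Matrix.diagonal]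
        field_simp
  have h1 : (1 : Matrix (Fin 3) (Fin 3) ℂ).mulVec φ = φ := Matrix.one_mulVec φ
  unfold Tmat
  rw [Matrix.add_mulVec, Matrix.smul_mulVec, Matrix.smul_mulVec, h1, hNM]
  funext i
  simp only [Pi.add_apply, Pi.smul_apply, Pi.zero_apply, smul_eq_mul]
  field_simp
  ring
end
end

section
/- With T(ζ) as defined from ζ₁ and φ = (φ₁,φ₂,φ₃), every column vector ψ = (ψ₁,ψ₂,ψ₃)ᵀ ∈ ℂ³ orthogonal to φ with respect to the Hermitian inner product (i.e., φ₁*ψ₁ + φ₂*ψ₂ + φ₃*ψ₃ = 0) satisfies T(ζ₁*)·ψ = 0. In particular, T(ζ₁*)·(−φ₂*, φ₁*, 0)ᵀ = 0 and T(ζ₁*)·(−φ₃*, 0, φ₁*)ᵀ = 0. -/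
open Complex Matrix

noncomputable section

/-- every vector Hermitian-orthogonal to the seed φ lies in the
kernel of T(ζ₁^*); in particular (-φ₂^*, φ₁^*, 0)ᵀ and (-φ₃^*, 0, φ₁^*)ᵀ do. -/
theorem darboux_matrix_annihilates_orthogonal_vectors
    (ζ₁ : ℂ) (hζ₁ : ζ₁ ≠ 0)
    (φ : Fin 3 → ℂ) (hD : Dval ζ₁ φ ≠ 0) :
    (∀ ψ : Fin 3 → ℂ,
      starRingEnd ℂ (φ 0) * ψ 0 + starRingEnd ℂ (φ 1) * ψ 1 + starRingEnd ℂ (φ 2) * ψ 2 = 0 →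
      (Tmat ζ₁ φ (starRingEnd ℂ ζ₁)).mulVec ψ = 0) ∧
    (Tmat ζ₁ φ (starRingEnd ℂ ζ₁)).mulVec
      ![-starRingEnd ℂ (φ 1), starRingEnd ℂ (φ 0), 0] = 0 ∧
    (Tmat ζ₁ φ (starRingEnd ℂ ζ₁)).mulVec
      ![-starRingEnd ℂ (φ 2), 0, starRingEnd ℂ (φ 0)] = 0 := by
  have main : ∀ ψ : Fin 3 → ℂ,
      starRingEnd ℂ (φ 0) * ψ 0 + starRingEnd ℂ (φ 1) * ψ 1 + starRingEnd ℂ (φ 2) * ψ 2 = 0 →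
      (Tmat ζ₁ φ (starRingEnd ℂ ζ₁)).mulVec ψ = 0 := by
    intro ψ hψ
    have hMeq : Mmat ζ₁ φ (starRingEnd ℂ ζ₁)
        = Matrix.of (fun _ j : Fin 3 => starRingEnd ℂ ζ₁ * starRingEnd ℂ (φ j)) := by
      ext i j
      fin_cases i <;> fin_cases j <;>
        simp [Mmat, Matrix.cons_val_two, Matrix.head_cons, Matrix.tail_cons, Matrix.vecHead, Matrix.vecTail]
    have hM : (Mmat ζ₁ φ (starRingEnd ℂ ζ₁)).mulVec ψ = 0 := by
      funext i
      simp only [hMeq, Matrix.mulVec, dotProduct, Fin.sum_univ_three, Matrix.of_apply,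
        Pi.zero_apply]
      linear_combination starRingEnd ℂ ζ₁ * hψ
    simp [Tmat, Matrix.add_mulVec, Matrix.smul_mulVec, ← Matrix.mulVec_mulVec, hM]
  refine ⟨main, main _ (by simp; ring), main _ (by simp; ring)⟩
end
end

section
/- Let n ≥ 2, fix ζ₁ ∈ ℂ with ζ₁ ≠ 0, and let φ = (φ₁, …, φₙ) ∈ ℂⁿ satisfy D := ζ₁|φ₁|² + ζ₁*(|φ₂|² + ⋯ + |φₙ|²) ≠ 0. Define the n×n matrix T(ζ) = ((ζ²−(ζ₁*)²)/(ζ₁*)²)·Iₙ + (((ζ₁*)²−ζ₁²)/(ζ₁*)²)·N(ζ)·M(ζ), where N(ζ) = diag(ζφ₁/(ζ₁D), ζφ₂/(ζ₁D*), …, ζφₙ/(ζ₁D*)), the first row of M(ζ) is (ζφ₁*, ζ₁*φ₂*, …, ζ₁*φₙ*), and each of the remaining n−1 rows of M(ζ) equals (ζ₁*φ₁*, ζφ₂*, …, ζφₙ*). Then T(ζ₁)·φ = 0, where φ is regarded as a column vector; i.e., the multi-component Darboux matrix annihilates its seed vector at the spectral point ζ₁. -/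
open Complex Matrix

noncomputable section

/-- the multi-component (n ≥ 2, here n = m + 2) Darboux matrix
annihilates its seed vector at the spectral point ζ₁. -/
theorem multicomponent_darboux_matrix_annihilates_seed
    (m : ℕ)
    (ζ₁ : ℂ) (hζ₁ : ζ₁ ≠ 0)
    (φ : Fin (m + 2) → ℂ)
    (D : ℂ)
    (hD : D = ζ₁ * ((‖φ 0‖ ^ 2 : ℝ) : ℂ)
      + starRingEnd ℂ ζ₁ *
          ∑ j ∈ Finset.univ.erase (0 : Fin (m + 2)), ((‖φ j‖ ^ 2 : ℝ) : ℂ))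
    (hDne : D ≠ 0)
    (N M : ℂ → Matrix (Fin (m + 2)) (Fin (m + 2)) ℂ)
    (hN : N = fun ζ => Matrix.diagonal (fun j =>
      if j = 0 then ζ * φ 0 / (ζ₁ * D) else ζ * φ j / (ζ₁ * starRingEnd ℂ D)))
    (hM : M = fun ζ => Matrix.of (fun i j =>
      if i = 0 then
        (if j = 0 then ζ * starRingEnd ℂ (φ 0) else starRingEnd ℂ ζ₁ * starRingEnd ℂ (φ j))
      else
        (if j = 0 then starRingEnd ℂ ζ₁ * starRingEnd ℂ (φ 0) else ζ * starRingEnd ℂ (φ j))))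
    (T : ℂ → Matrix (Fin (m + 2)) (Fin (m + 2)) ℂ)
    (hT : T = fun ζ =>
      ((ζ ^ 2 - (starRingEnd ℂ ζ₁) ^ 2) / (starRingEnd ℂ ζ₁) ^ 2) •
          (1 : Matrix (Fin (m + 2)) (Fin (m + 2)) ℂ)
        + (((starRingEnd ℂ ζ₁) ^ 2 - ζ₁ ^ 2) / (starRingEnd ℂ ζ₁) ^ 2) • (N ζ * M ζ)) :
    (T ζ₁).mulVec φ = 0 := by
  have key : ∀ z : ℂ, starRingEnd ℂ z * z = ((‖z‖ ^ 2 : ℝ) : ℂ) := fun z => by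
    rw [mul_comm, Complex.mul_conj, Complex.sq_norm]
  have hMv : (M ζ₁).mulVec φ = fun i => if i = 0 then D else starRingEnd ℂ D := by
    funext i
    rw [hM]
    simp only [Matrix.mulVec, dotProduct, Matrix.of_apply]
    rw [← Finset.add_sum_erase _ _ (Finset.mem_univ (0 : Fin (m + 2)))]
    by_cases hi : i = 0
    · simp only [hi, if_true, if_pos rfl]
      rw [hD]
      congr 1
      · rw [mul_assoc, key]
      · rw [Finset.mul_sum]
        refine Finset.sum_congr rfl fun j hj => ?_
        rw [if_neg (Finset.ne_of_mem_erase hj), mul_assoc, key]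
    · simp only [hi, if_false, if_pos rfl, if_true]
      rw [hD, map_add, _root_.map_mul, _root_.map_mul, Complex.conj_conj, map_sum]
      congr 1
      · rw [Complex.conj_ofReal, mul_assoc, key]
      · rw [Finset.mul_sum]
        refine Finset.sum_congr rfl fun j hj => ?_
        rw [if_neg (Finset.ne_of_mem_erase hj), Complex.conj_ofReal, mul_assoc, key]
  have hNM : (N ζ₁ * M ζ₁).mulVec φ = φ := by
    funext i
    rw [← Matrix.mulVec_mulVec, hMv, hN, Matrix.mulVec_diagonal]
    by_cases hi : i = 0
    · simp only [hi, if_true]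
      field_simp
    · simp only [hi, if_false]
      have hDc : starRingEnd ℂ D ≠ 0 := by simpa using hDne
      field_simp
  rw [hT]
  simp only [Matrix.add_mulVec, Matrix.smul_mulVec, hNM, Matrix.one_mulVec]
  have hζc : (starRingEnd ℂ ζ₁) ^ 2 ≠ 0 := pow_ne_zero _ (by simpa using hζ₁)
  funext i
  simp only [Pi.add_apply, Pi.smul_apply, smul_eq_mul, Pi.zero_apply]
  field_simp
  ring
end
end
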